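/- arXiv:2212.12978 — 7 statements merged into one kernel-verified Lean document; each statement's English description precedes it below -/
import Mathlib

section
/- Let x(y,z,v) denote the unique minimizer of F(·,y,z,v) over a convex compact set X. Then x(y,z,v) is σ₁-Lipschitz in y with σ₁ = (L_y + r₁ − L_x)/(r₁ − L_x): that is, ‖x(y',z,v) − x(y,z,v)‖ ≤ σ₁‖y'−y‖ for all y, y' ∈ Y. -/
/-!
Let `μ = r₁ - L_x`. Since `∇ₓ f` is `L_x`-Lipschitz, `f(·, y)` lies above its tangent planes up
to `L_x/2 ‖·‖²`, so `f(·, y) + (r₁/2)‖· - z‖²` grows at least by `(μ/2)‖x - x(y)‖²` away from its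
minimiser `x(y)` over the convex set `X`. Adding this growth inequality for `y` at `x(y')` to the
one for `y'` at `x(y)` leaves `μ‖x(y') - x(y)‖²` below the mixed difference
`f(x(y'), y) - f(x(y), y) - f(x(y'), y') + f(x(y), y')`, which the mean value inequality in `y`
bounds by `L_y ‖x(y') - x(y)‖ ‖y' - y‖`. Hence `‖x(y') - x(y)‖ ≤ (L_y/μ)‖y' - y‖ ≤ σ₁‖y' - y‖`.
-/

open scoped RealInnerProductSpace

section
variable {E : Type*} [NormedAddCommGroup E] [InnerProductSpace ℝ E] [CompleteSpace E]

theorem HasGradientAt.add {f g : E → ℝ} {f' g' x : E} (hf : HasGradientAt f f' x)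
    (hg : HasGradientAt g g' x) : HasGradientAt (fun y => f y + g y) (f' + g') x := by
  rw [hasGradientAt_iff_hasFDerivAt, map_add]
  exact hf.hasFDerivAt.add hg.hasFDerivAt

theorem HasGradientAt.sub {f g : E → ℝ} {f' g' x : E} (hf : HasGradientAt f f' x)
    (hg : HasGradientAt g g' x) : HasGradientAt (fun y => f y - g y) (f' - g') x := by
  rw [hasGradientAt_iff_hasFDerivAt, map_sub]
  exact hf.hasFDerivAt.sub hg.hasFDerivAt

theorem IsMinOn.inner_gradient_sub_nonneg {φ : E → ℝ} {G : E} {X : Set E} {a b : E}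
    (hmin : IsMinOn φ X a) (hX : Convex ℝ X) (ha : a ∈ X) (hb : b ∈ X)
    (hφ : HasGradientAt φ G a) : 0 ≤ ⟪G, b - a⟫ := by
  simpa using hmin.localize.hasFDerivWithinAt_nonneg hφ.hasFDerivAt.hasFDerivWithinAt
    (sub_mem_posTangentConeAt_of_segment_subset (hX.segment_subset ha hb))

theorem hasGradientAt_half_mul_norm_sub_sq (r : ℝ) (z x : E) :
    HasGradientAt (fun x => r / 2 * ‖x - z‖ ^ 2) (r • (x - z)) x := by
  refine hasGradientAt_iff_hasFDerivAt.mpr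
    ((((hasFDerivAt_id x).sub_const z).norm_sq).const_mul (r / 2) |>.congr_fderiv ?_)
  ext v
  simp [mul_left_comm, ← mul_assoc, mul_div_cancel₀]

theorem HasGradientAt.hasDerivAt_comp_add_smul {f : E → ℝ} {G x d : E} {t : ℝ}
    (hf : HasGradientAt f G (x + t • d)) :
    HasDerivAt (fun s : ℝ => f (x + s • d)) ⟪G, d⟫ t := by
  have hline : HasDerivAt (fun s : ℝ => x + s • d) d t := by
    simpa using ((hasDerivAt_id t).smul_const d).const_add x
  simpa [Function.comp_def] using hf.hasFDerivAt.comp_hasDerivAt t hline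

theorem add_inner_gradient_sub_le_of_lipschitz {f : E → ℝ} {g : E → E} {L : ℝ}
    (hg : ∀ x, HasGradientAt f (g x) x) (hL : ∀ x x', ‖g x - g x'‖ ≤ L * ‖x - x'‖) (x y : E) :
    f x + ⟪g x, y - x⟫ - L / 2 * ‖y - x‖ ^ 2 ≤ f y := by
  set d := y - x
  let ψ : ℝ → ℝ := fun t => f (x + t • d) - t * ⟪g x, d⟫ + L / 2 * ‖d‖ ^ 2 * t ^ 2
  have hψ : ∀ t, HasDerivAt ψ (⟪g (x + t • d) - g x, d⟫ + L * ‖d‖ ^ 2 * t) t := fun t => by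
    have := ((hg (x + t • d)).hasDerivAt_comp_add_smul.sub
      ((hasDerivAt_id t).mul_const ⟪g x, d⟫)).add ((hasDerivAt_pow 2 t).const_mul (L / 2 * ‖d‖ ^ 2))
    exact this.congr_deriv (by rw [inner_sub_left]; push_cast; ring)
  have hψ_nonneg : ∀ t ∈ interior (Set.Icc (0 : ℝ) 1),
      0 ≤ ⟪g (x + t • d) - g x, d⟫ + L * ‖d‖ ^ 2 * t := by
    intro t ht
    rw [interior_Icc] at ht
    have hgt : ‖g (x + t • d) - g x‖ ≤ L * ‖d‖ * t := by
      simpa [norm_smul, abs_of_pos ht.1, mul_comm, mul_left_comm] using hL (x + t • d) x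
    have hinner := abs_le.mp (abs_real_inner_le_norm (g (x + t • d) - g x) d)
    nlinarith [mul_le_mul_of_nonneg_right hgt (norm_nonneg d)]
  have hmono := monotoneOn_of_hasDerivWithinAt_nonneg (convex_Icc 0 1)
    (fun t _ => (hψ t).continuousAt.continuousWithinAt) (fun t _ => (hψ t).hasDerivWithinAt) hψ_nonneg
  have hψ01 := hmono (Set.left_mem_Icc.mpr zero_le_one) (Set.right_mem_Icc.mpr zero_le_one)
    zero_le_one
  simp only [ψ, d, zero_smul, add_zero, zero_mul, sub_zero, zero_pow two_ne_zero, mul_zero,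
    one_smul, add_sub_cancel, one_mul, one_pow, mul_one] at hψ01
  linarith

theorem IsMinOn.add_half_mul_sq_le_of_lipschitz_gradient {f : E → ℝ} {g : E → E} {L r : ℝ}
    (hg : ∀ x, HasGradientAt f (g x) x) (hL : ∀ x x', ‖g x - g x'‖ ≤ L * ‖x - x'‖)
    {X : Set E} (hX : Convex ℝ X) {z a b : E} (ha : a ∈ X) (hb : b ∈ X)
    (hmin : IsMinOn (fun x => f x + r / 2 * ‖x - z‖ ^ 2) X a) :
    f a + r / 2 * ‖a - z‖ ^ 2 + (r - L) / 2 * ‖b - a‖ ^ 2 ≤ f b + r / 2 * ‖b - z‖ ^ 2 := by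
  have hfirst := hmin.inner_gradient_sub_nonneg hX ha hb
    ((hg a).add (hasGradientAt_half_mul_norm_sub_sq r z a))
  have hlower := add_inner_gradient_sub_le_of_lipschitz hg hL a b
  have hexpand : ‖b - z‖ ^ 2 = ‖a - z‖ ^ 2 + 2 * ⟪a - z, b - a⟫ + ‖b - a‖ ^ 2 := by
    rw [show b - z = (a - z) + (b - a) by abel, norm_add_sq_real]
  rw [inner_add_left, real_inner_smul_left] at hfirst
  rw [hexpand]
  nlinarith

theorem sub_le_mul_norm_of_norm_gradient_le {h : E → ℝ} {G : E → E} {C : ℝ}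
    (hG : ∀ w, HasGradientAt h (G w) w) (hC : ∀ w, ‖G w‖ ≤ C) (y y' : E) :
    h y' - h y ≤ C * ‖y' - y‖ := by
  have := convex_univ.norm_image_sub_le_of_norm_hasFDerivWithin_le
    (fun w _ => (hG w).hasFDerivAt.hasFDerivWithinAt)
    (fun w _ => by rw [LinearIsometryEquiv.norm_map]; exact hC w) (Set.mem_univ y) (Set.mem_univ y')
  exact (le_abs_self _).trans (by simpa [Real.norm_eq_abs] using this)

end

theorem stmt_2_general
    {E D : Type*} [NormedAddCommGroup E] [InnerProductSpace ℝ E] [CompleteSpace E]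
    [NormedAddCommGroup D] [InnerProductSpace ℝ D] [CompleteSpace D]
    (f : E → D → ℝ) (gx : E → D → E) (gy : E → D → D) (Lx Ly r₁ r₂ : ℝ)
    (hr₁ : r₁ > Lx)
    (X : Set E) (Y : Set D)
    (hXconv : Convex ℝ X)
    (hgradx : ∀ x y, HasGradientAt (fun x' => f x' y) (gx x y) x)
    (hgrady : ∀ x y, HasGradientAt (fun y' => f x y') (gy x y) y)
    (hLipx : ∀ x x' y y', ‖gx x y - gx x' y'‖ ≤ Lx * (‖x - x'‖ + ‖y - y'‖))
    (hLipy : ∀ x x' y y', ‖gy x y - gy x' y'‖ ≤ Ly * (‖x - x'‖ + ‖y - y'‖))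
    (F : E → D → E → D → ℝ)
    (hF : ∀ x y z v, F x y z v
      = f x y + r₁ / 2 * ‖x - z‖ ^ 2 - r₂ / 2 * ‖y - v‖ ^ 2)
    (xm : D → E → D → E)
    (hxm : ∀ y z v, xm y z v ∈ X ∧ IsMinOn (fun x => F x y z v) X (xm y z v)) :
    ∀ y ∈ Y, ∀ y' ∈ Y, ∀ (z : E) (v : D),
      ‖xm y' z v - xm y z v‖ ≤ (Ly + r₁ - Lx) / (r₁ - Lx) * ‖y' - y‖ := by
  intro y _ y' _ z v
  have hmin : ∀ w, IsMinOn (fun x => f x w + r₁ / 2 * ‖x - z‖ ^ 2) X (xm w z v) :=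
    fun w x hx => by
      have := (hxm w z v).2 hx
      simp only [Set.mem_ofPred_eq, hF] at this ⊢
      linarith
  have hgrowth (w w' : D) := (hmin w).add_half_mul_sq_le_of_lipschitz_gradient
    (fun x => hgradx x w) (fun a b => by simpa using hLipx a b w w) hXconv
    (hxm w z v).1 (hxm w' z v).1
  set x₁ := xm y z v
  set x₂ := xm y' z v
  have hcross := sub_le_mul_norm_of_norm_gradient_le (h := fun w => f x₂ w - f x₁ w)
    (fun w => (hgrady x₂ w).sub (hgrady x₁ w)) (fun w => by simpa using hLipy x₂ x₁ w w) y' y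
  have hLy : 0 ≤ Ly * ‖y' - y‖ := by
    simpa using (norm_nonneg _).trans (hLipy x₁ x₁ y' y)
  have hsq : (r₁ - Lx) * ‖x₂ - x₁‖ ^ 2 ≤ Ly * ‖x₂ - x₁‖ * ‖y' - y‖ := by
    have h₁ := hgrowth y y'
    have h₂ := hgrowth y' y
    rw [norm_sub_rev y y'] at hcross
    rw [norm_sub_rev (xm y z v)] at h₂
    linarith
  have hlin : (r₁ - Lx) * ‖x₂ - x₁‖ ≤ Ly * ‖y' - y‖ := by
    rcases (norm_nonneg (x₂ - x₁)).eq_or_lt with h | h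
    · simpa [← h] using hLy
    · nlinarith
  rw [div_mul_eq_mul_div, le_div_iff₀ (sub_pos.mpr hr₁)]
  linarith [mul_nonneg (sub_pos.mpr hr₁).le (norm_nonneg (y' - y))]

/-- the minimizer `x(y,z,v)` of `F(·,y,z,v)` over the compact
convex set `X` is `σ₁`-Lipschitz in `y` with `σ₁ = (L_y + r₁ − L_x)/(r₁ − L_x)`. -/
theorem stmt_2
    {E D : Type*} [NormedAddCommGroup E] [InnerProductSpace ℝ E] [CompleteSpace E]
    [NormedAddCommGroup D] [InnerProductSpace ℝ D] [CompleteSpace D]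
    (f : E → D → ℝ) (gx : E → D → E) (gy : E → D → D) (Lx Ly r₁ r₂ : ℝ)
    (hr₁ : r₁ > Lx) (hr₂ : r₂ > 0)
    (X : Set E) (Y : Set D)
    (hXc : IsCompact X) (hXconv : Convex ℝ X) (hXne : X.Nonempty)
    (hYc : IsCompact Y) (hYconv : Convex ℝ Y) (hYne : Y.Nonempty)
    (hgradx : ∀ x y, HasGradientAt (fun x' => f x' y) (gx x y) x)
    (hgrady : ∀ x y, HasGradientAt (fun y' => f x y') (gy x y) y)
    (hLipx : ∀ x x' y y', ‖gx x y - gx x' y'‖ ≤ Lx * (‖x - x'‖ + ‖y - y'‖))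
    (hLipy : ∀ x x' y y', ‖gy x y - gy x' y'‖ ≤ Ly * (‖x - x'‖ + ‖y - y'‖))
    (F : E → D → E → D → ℝ)
    (hF : ∀ x y z v, F x y z v
      = f x y + r₁ / 2 * ‖x - z‖ ^ 2 - r₂ / 2 * ‖y - v‖ ^ 2)
    (xm : D → E → D → E)
    (hxm : ∀ y z v, xm y z v ∈ X ∧ IsMinOn (fun x => F x y z v) X (xm y z v)) :
    ∀ y ∈ Y, ∀ y' ∈ Y, ∀ (z : E) (v : D),
      ‖xm y' z v - xm y z v‖ ≤ (Ly + r₁ - Lx) / (r₁ - Lx) * ‖y' - y‖ :=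
  stmt_2_general f gx gy Lx Ly r₁ r₂ hr₁ X Y hXconv hgradx hgrady hLipx hLipy F hF xm hxm
end

section
/- Let x(y,z,v) denote the unique minimizer of F(·,y,z,v) over the convex compact set X. Then x(y,z,v) is σ₂-Lipschitz in z with σ₂ = r₁/(r₁ − L_x): that is, ‖x(y,z',v) − x(y,z,v)‖ ≤ σ₂‖z'−z‖ for all z, z' ∈ ℝⁿ. -/
/-!
Write `a = x(y,z,v)` and `b = x(y,z',v)`. Both minimize `f(·,y) + (r₁/2)‖· − w‖²` over the
convex set `X` (for `w = z`, `z'`), so each satisfies the first-order variational inequality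
against the other. Adding the two inequalities gives the monotonicity estimate
`r₁‖b − a‖² ≤ r₁⟪z' − z, b − a⟫ + ⟪∇ₓf(a) − ∇ₓf(b), b − a⟫ ≤ r₁‖z' − z‖‖b − a‖ + L_x‖b − a‖²`,
and dividing by `(r₁ − L_x)‖b − a‖` gives the claim.
-/

open scoped RealInnerProductSpace

section
variable {E : Type*} [NormedAddCommGroup E] [InnerProductSpace ℝ E] [CompleteSpace E]
  {φ : E → ℝ} {X : Set E} {a b g ga gb u z z' : E} {r L : ℝ}

theorem IsMinOn.inner_gradient_nonneg (hmin : IsMinOn φ X a) (hX : Convex ℝ X) (ha : a ∈ X)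
    (hu : u ∈ X) (hφ : HasGradientAt φ g a) : 0 ≤ ⟪g, u - a⟫ :=
  hmin.localize.hasFDerivWithinAt_nonneg hφ.hasFDerivAt.hasFDerivWithinAt
    (sub_mem_posTangentConeAt_of_segment_subset (hX.segment_subset ha hu))

theorem HasGradientAt.add_half_mul_norm_sub_sq (hφ : HasGradientAt φ g a) (r : ℝ) (z : E) :
    HasGradientAt (fun x => φ x + r / 2 * ‖x - z‖ ^ 2) (g + r • (a - z)) a := by
  have hsq := ((hasFDerivAt_id a).sub_const z).norm_sq.const_mul (r / 2)
  refine (hφ.hasFDerivAt.add hsq).congr_fderiv ?_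
  ext w
  simp only [add_apply, smul_apply,
    ContinuousLinearMap.comp_id, id_eq, InnerProductSpace.toDual_apply_apply, coe_innerSL_apply,
    inner_add_left, real_inner_smul_left, nsmul_eq_mul, Nat.cast_ofNat, smul_eq_mul]
  ring

theorem mul_norm_sub_sq_le_of_isMinOn_prox (hX : Convex ℝ X) (ha : a ∈ X) (hb : b ∈ X)
    (hφa : HasGradientAt φ ga a) (hφb : HasGradientAt φ gb b)
    (hmina : IsMinOn (fun x => φ x + r / 2 * ‖x - z‖ ^ 2) X a)
    (hminb : IsMinOn (fun x => φ x + r / 2 * ‖x - z'‖ ^ 2) X b) :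
    r * ‖b - a‖ ^ 2 ≤ r * ⟪z' - z, b - a⟫ + ⟪ga - gb, b - a⟫ := by
  have hvia := hmina.inner_gradient_nonneg hX ha hb (hφa.add_half_mul_norm_sub_sq r z)
  have hvib := hminb.inner_gradient_nonneg hX hb ha (hφb.add_half_mul_norm_sub_sq r z')
  have hsum : ⟪ga + r • (a - z), b - a⟫ - ⟪gb + r • (b - z'), b - a⟫
      = r * ⟪z' - z, b - a⟫ + ⟪ga - gb, b - a⟫ - r * ‖b - a‖ ^ 2 := by
    rw [← real_inner_self_eq_norm_sq, ← inner_sub_left, ← real_inner_smul_left,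
      ← real_inner_smul_left, ← inner_add_left, ← inner_sub_left]
    congr 1
    simp only [smul_sub]
    abel
  rw [← neg_sub b a, inner_neg_right] at hvib
  linarith

theorem norm_sub_le_of_isMinOn_prox (hr₀ : 0 ≤ r) (hLr : L < r) (hX : Convex ℝ X)
    (ha : a ∈ X) (hb : b ∈ X) (hφa : HasGradientAt φ ga a) (hφb : HasGradientAt φ gb b)
    (hg : ‖ga - gb‖ ≤ L * ‖a - b‖)
    (hmina : IsMinOn (fun x => φ x + r / 2 * ‖x - z‖ ^ 2) X a)
    (hminb : IsMinOn (fun x => φ x + r / 2 * ‖x - z'‖ ^ 2) X b) :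
    ‖b - a‖ ≤ r / (r - L) * ‖z' - z‖ := by
  have hmono := mul_norm_sub_sq_le_of_isMinOn_prox hX ha hb hφa hφb hmina hminb
  have hz : ⟪z' - z, b - a⟫ ≤ ‖z' - z‖ * ‖b - a‖ := real_inner_le_norm _ _
  have hgrad : ⟪ga - gb, b - a⟫ ≤ L * ‖b - a‖ * ‖b - a‖ := by
    rw [norm_sub_rev a b] at hg
    exact (real_inner_le_norm _ _).trans (mul_le_mul_of_nonneg_right hg (norm_nonneg _))
  have hquad : (r - L) * ‖b - a‖ * ‖b - a‖ ≤ r * ‖z' - z‖ * ‖b - a‖ := by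
    nlinarith
  have hlin : (r - L) * ‖b - a‖ ≤ r * ‖z' - z‖ := by
    rcases (norm_nonneg (b - a)).eq_or_lt with h0 | hpos
    · rw [← h0, mul_zero]; positivity
    · exact le_of_mul_le_mul_right hquad hpos
  rw [div_mul_eq_mul_div, le_div_iff₀ (sub_pos.2 hLr)]
  linarith

end

theorem stmt_3_general
    {E D : Type*} [NormedAddCommGroup E] [InnerProductSpace ℝ E] [CompleteSpace E]
    [NormedAddCommGroup D]
    (f : E → D → ℝ) (gx : E → D → E) (Lx r₁ r₂ : ℝ)
    (hr₁ : r₁ > Lx)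
    (X : Set E) (Y : Set D)
    (hXconv : Convex ℝ X)
    (hgradx : ∀ x y, HasGradientAt (fun x' => f x' y) (gx x y) x)
    (hLipx : ∀ x x' y y', ‖gx x y - gx x' y'‖ ≤ Lx * (‖x - x'‖ + ‖y - y'‖))
    (F : E → D → E → D → ℝ)
    (hF : ∀ x y z v, F x y z v
      = f x y + r₁ / 2 * ‖x - z‖ ^ 2 - r₂ / 2 * ‖y - v‖ ^ 2)
    (xm : D → E → D → E)
    (hxm : ∀ y z v, xm y z v ∈ X ∧ IsMinOn (fun x => F x y z v) X (xm y z v)) :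
    ∀ y ∈ Y, ∀ (z z' : E) (v : D),
      ‖xm y z' v - xm y z v‖ ≤ r₁ / (r₁ - Lx) * ‖z' - z‖ := by
  intro y _ z z' v
  rcases eq_or_ne z' z with rfl | hzz
  · simp
  have hLx : 0 ≤ Lx := by
    have h := hLipx z' z y y
    rw [sub_self, norm_zero, add_zero] at h
    exact nonneg_of_mul_nonneg_left ((norm_nonneg _).trans h) (norm_sub_pos_iff.2 hzz)
  have hprox (w : E) : (fun x => F x y w v)
      = fun x => (f x y - r₂ / 2 * ‖y - v‖ ^ 2) + r₁ / 2 * ‖x - w‖ ^ 2 :=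
    funext fun x => by rw [hF]; ring
  obtain ⟨ha, hmina⟩ := hxm y z v
  obtain ⟨hb, hminb⟩ := hxm y z' v
  rw [hprox] at hmina hminb
  refine norm_sub_le_of_isMinOn_prox (by linarith) hr₁ hXconv ha hb
    ((hgradx _ y).hasFDerivAt.sub_const _) ((hgradx _ y).hasFDerivAt.sub_const _) ?_ hmina hminb
  simpa using hLipx (xm y z v) (xm y z' v) y y

/-- the minimizer `x(y,z,v)` of `F(·,y,z,v)` over the compact
convex set `X` is `σ₂`-Lipschitz in `z` with `σ₂ = r₁/(r₁ − L_x)`. -/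
theorem stmt_3
    {E D : Type*} [NormedAddCommGroup E] [InnerProductSpace ℝ E] [CompleteSpace E]
    [NormedAddCommGroup D] [InnerProductSpace ℝ D] [CompleteSpace D]
    (f : E → D → ℝ) (gx : E → D → E) (gy : E → D → D) (Lx Ly r₁ r₂ : ℝ)
    (hr₁ : r₁ > Lx) (hr₂ : r₂ > 0)
    (X : Set E) (Y : Set D)
    (hXc : IsCompact X) (hXconv : Convex ℝ X) (hXne : X.Nonempty)
    (hYc : IsCompact Y) (hYconv : Convex ℝ Y) (hYne : Y.Nonempty)
    (hgradx : ∀ x y, HasGradientAt (fun x' => f x' y) (gx x y) x)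
    (hgrady : ∀ x y, HasGradientAt (fun y' => f x y') (gy x y) y)
    (hLipx : ∀ x x' y y', ‖gx x y - gx x' y'‖ ≤ Lx * (‖x - x'‖ + ‖y - y'‖))
    (hLipy : ∀ x x' y y', ‖gy x y - gy x' y'‖ ≤ Ly * (‖x - x'‖ + ‖y - y'‖))
    (F : E → D → E → D → ℝ)
    (hF : ∀ x y z v, F x y z v
      = f x y + r₁ / 2 * ‖x - z‖ ^ 2 - r₂ / 2 * ‖y - v‖ ^ 2)
    (xm : D → E → D → E)
    (hxm : ∀ y z v, xm y z v ∈ X ∧ IsMinOn (fun x => F x y z v) X (xm y z v)) :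
    ∀ y ∈ Y, ∀ (z z' : E) (v : D),
      ‖xm y z' v - xm y z v‖ ≤ r₁ / (r₁ - Lx) * ‖z' - z‖ :=
  stmt_3_general f gx Lx r₁ r₂ hr₁ X Y hXconv hgradx hLipx F hF xm hxm
end

section
/- Let y(x,z,v) be the unique maximizer of F(x,·,z,v) over Y. Then y(x,z,v) is σ₅-Lipschitz in v with σ₅ = r₂/(r₂−L_y): ‖y(x,z,v) − y(x,z,v')‖ ≤ σ₅‖v−v'‖ for all v, v' ∈ ℝᵈ. -/
open scoped RealInnerProductSpace

/-!
Adding the first-order optimality conditions at the maximizers `y₁, y₂` for the centres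
`v, v'` gives `r₂‖y₁ - y₂‖² ≤ ⟪∇f(y₁) - ∇f(y₂), y₁ - y₂⟫ + r₂⟪v - v', y₁ - y₂⟫`. The first
term is at most `L_y‖y₁ - y₂‖²` by the Lipschitz bound on the gradient, and Cauchy–Schwarz
on the second leaves `(r₂ - L_y)‖y₁ - y₂‖ ≤ r₂‖v - v'‖`.
-/

section
variable {D : Type*} [NormedAddCommGroup D] [InnerProductSpace ℝ D] [CompleteSpace D]

theorem HasGradientAt.sub_half_mul_norm_sub_sq {h : D → ℝ} {g a : D} (hh : HasGradientAt h g a)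
    (r : ℝ) (w : D) :
    HasGradientAt (fun y => h y - r / 2 * ‖y - w‖ ^ 2) (g - r • (a - w)) a := by
  rw [hasGradientAt_iff_hasFDerivAt] at hh ⊢
  have hsq := (((hasFDerivAt_id a).sub_const w).norm_sq).const_mul (r / 2)
  refine (hh.sub hsq).congr_fderiv ?_
  ext u
  simp
  ring

theorem IsMaxOn.inner_gradient_sub_nonpos {φ : D → ℝ} {g a b : D} {s : Set D}
    (hmax : IsMaxOn φ s a) (hφ : HasGradientAt φ g a) (hs : Convex ℝ s) (ha : a ∈ s)
    (hb : b ∈ s) : ⟪g, b - a⟫ ≤ 0 := by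
  simpa using hmax.localize.hasFDerivWithinAt_nonpos hφ.hasFDerivAt.hasFDerivWithinAt
    (sub_mem_posTangentConeAt_of_segment_subset (hs.segment_subset ha hb))

theorem norm_sub_le_of_isMaxOn_prox {h : D → ℝ} {g : D → D} {s : Set D} {L r : ℝ}
    (hs : Convex ℝ s) (hr : 0 ≤ r) (hLr : L < r) (hh : ∀ a, HasGradientAt h (g a) a)
    (hg : ∀ a b, ⟪g a - g b, a - b⟫ ≤ L * ‖a - b‖ ^ 2) {w₁ w₂ y₁ y₂ : D}
    (hy₁ : y₁ ∈ s) (hy₂ : y₂ ∈ s)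
    (hmax₁ : IsMaxOn (fun y => h y - r / 2 * ‖y - w₁‖ ^ 2) s y₁)
    (hmax₂ : IsMaxOn (fun y => h y - r / 2 * ‖y - w₂‖ ^ 2) s y₂) :
    ‖y₁ - y₂‖ ≤ r / (r - L) * ‖w₁ - w₂‖ := by
  have h₁ := hmax₁.inner_gradient_sub_nonpos ((hh y₁).sub_half_mul_norm_sub_sq r w₁) hs hy₁ hy₂
  have h₂ := hmax₂.inner_gradient_sub_nonpos ((hh y₂).sub_half_mul_norm_sub_sq r w₂) hs hy₂ hy₁
  have hsum : r * ‖y₁ - y₂‖ ^ 2 ≤ ⟪g y₁ - g y₂, y₁ - y₂⟫ + r * ⟪w₁ - w₂, y₁ - y₂⟫ := by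
    rw [← neg_sub y₁ y₂, inner_neg_right] at h₁
    simp only [inner_sub_left, inner_sub_right, real_inner_smul_left, real_inner_self_eq_norm_sq,
      norm_sub_sq_real] at h₁ h₂ ⊢
    linear_combination h₁ + h₂ + r * real_inner_comm y₁ y₂
  have hkey : (r - L) * ‖y₁ - y₂‖ ^ 2 ≤ r * ‖w₁ - w₂‖ * ‖y₁ - y₂‖ := by
    nlinarith [hg y₁ y₂, real_inner_le_norm (w₁ - w₂) (y₁ - y₂)]
  rw [div_mul_eq_mul_div, le_div_iff₀ (sub_pos.2 hLr)]
  rcases (norm_nonneg (y₁ - y₂)).eq_or_lt with h0 | hpos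
  · rw [← h0, zero_mul]; positivity
  · nlinarith
end

theorem stmt_5_general
    {E D : Type*} [NormedAddCommGroup E]
    [NormedAddCommGroup D] [InnerProductSpace ℝ D] [CompleteSpace D]
    (f : E → D → ℝ) (gy : E → D → D) (Ly r₁ r₂ : ℝ)
    (hr₂ : r₂ > Ly)
    (X : Set E) (Y : Set D)
    (hYconv : Convex ℝ Y)
    (hgrady : ∀ x y, HasGradientAt (fun y' => f x y') (gy x y) y)
    (hLipy : ∀ x x' y y', ‖gy x y - gy x' y'‖ ≤ Ly * (‖x - x'‖ + ‖y - y'‖))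
    (F : E → D → E → D → ℝ)
    (hF : ∀ x y z v, F x y z v
      = f x y + r₁ / 2 * ‖x - z‖ ^ 2 - r₂ / 2 * ‖y - v‖ ^ 2)
    (ym : E → E → D → D)
    (hym : ∀ x z v, ym x z v ∈ Y ∧ IsMaxOn (fun y => F x y z v) Y (ym x z v)) :
    ∀ x ∈ X, ∀ (z : E) (v v' : D),
      ‖ym x z v - ym x z v'‖ ≤ r₂ / (r₂ - Ly) * ‖v - v'‖ := by
  intro x _ z v v'
  -- `v ≠ v'` is what lets the Lipschitz bound force `0 ≤ Ly`.
  obtain rfl | hvv := eq_or_ne v v'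
  · simp
  have hLy : 0 ≤ Ly := by
    have h : 0 ≤ Ly * ‖v - v'‖ := by simpa using (norm_nonneg _).trans (hLipy x x v v')
    exact nonneg_of_mul_nonneg_left h (norm_pos_iff.2 (sub_ne_zero.2 hvv))
  have hgrad a : HasGradientAt (fun y => f x y + r₁ / 2 * ‖x - z‖ ^ 2) (gy x a) a :=
    hasGradientAt_iff_hasFDerivAt.2 ((hgrady x a).hasFDerivAt.add_const _)
  have hmono a b : ⟪gy x a - gy x b, a - b⟫ ≤ Ly * ‖a - b‖ ^ 2 := by
    calc ⟪gy x a - gy x b, a - b⟫ ≤ ‖gy x a - gy x b‖ * ‖a - b‖ := real_inner_le_norm _ _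
      _ ≤ Ly * ‖a - b‖ * ‖a - b‖ := by gcongr; simpa using hLipy x x a b
      _ = Ly * ‖a - b‖ ^ 2 := by ring
  simp only [hF] at hym
  exact norm_sub_le_of_isMaxOn_prox hYconv (hLy.trans hr₂.le) hr₂ hgrad hmono
    (hym x z v).1 (hym x z v').1 (hym x z v).2 (hym x z v').2

/-- the maximizer `y(x,z,v)` of `F(x,·,z,v)` over the compact
convex set `Y` is `σ₅`-Lipschitz in `v` with `σ₅ = r₂/(r₂ − L_y)`. -/
theorem stmt_5
    {E D : Type*} [NormedAddCommGroup E] [InnerProductSpace ℝ E] [CompleteSpace E]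
    [NormedAddCommGroup D] [InnerProductSpace ℝ D] [CompleteSpace D]
    (f : E → D → ℝ) (gx : E → D → E) (gy : E → D → D) (Lx Ly r₁ r₂ : ℝ)
    (hr₁ : r₁ > Lx) (hr₂ : r₂ > Ly)
    (X : Set E) (Y : Set D)
    (hXc : IsCompact X) (hXconv : Convex ℝ X) (hXne : X.Nonempty)
    (hYc : IsCompact Y) (hYconv : Convex ℝ Y) (hYne : Y.Nonempty)
    (hgradx : ∀ x y, HasGradientAt (fun x' => f x' y) (gx x y) x)
    (hgrady : ∀ x y, HasGradientAt (fun y' => f x y') (gy x y) y)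
    (hLipx : ∀ x x' y y', ‖gx x y - gx x' y'‖ ≤ Lx * (‖x - x'‖ + ‖y - y'‖))
    (hLipy : ∀ x x' y y', ‖gy x y - gy x' y'‖ ≤ Ly * (‖x - x'‖ + ‖y - y'‖))
    (F : E → D → E → D → ℝ)
    (hF : ∀ x y z v, F x y z v
      = f x y + r₁ / 2 * ‖x - z‖ ^ 2 - r₂ / 2 * ‖y - v‖ ^ 2)
    (ym : E → E → D → D)
    (hym : ∀ x z v, ym x z v ∈ Y ∧ IsMaxOn (fun y => F x y z v) Y (ym x z v)) :
    ∀ x ∈ X, ∀ (z : E) (v v' : D),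
      ‖ym x z v - ym x z v'‖ ≤ r₂ / (r₂ - Ly) * ‖v - v'‖ :=
  stmt_5_general f gy Ly r₁ r₂ hr₂ X Y hYconv hgrady hLipy F hF ym hym
end

section
/- (Primal descent) For the DS-GDA iterates, F(x^t,y^t,z^t,v^t) ≥ F(x^{t+1},y^{t+1},z^{t+1},v^{t+1}) + (1/c − (L_x+r₁)/2)‖x^{t+1}−x^t‖² + ⟨∇_y F(x^{t+1},y^t,z^t,v^t), y^t − y^{t+1}⟩ + ((r₂−L_y)/2)‖y^{t+1}−y^t‖² + ((2−β)/(2β))·r₁‖z^{t+1}−z^t‖² + ((μ−2)/(2μ))·r₂‖v^{t+1}−v^t‖². -/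
/-!
The estimate adds up three steps. In `x`, the descent lemma for the
`Lx`-smooth `f (·, y⁰)`, together with the exact expansion of `r₁/2 ‖x - z⁰‖²`, bounds
`F (x¹, y⁰, z⁰, v⁰)`; testing the projection inequality defining `x¹` at the feasible point `x⁰`
turns its linear term into `-(1/c) ‖x¹ - x⁰‖²`. In `y`, the same argument for `f (x¹, ·)` and the
concave term `-r₂/2 ‖y - v⁰‖²` produces the inner-product term. Finally the averaging steps for
`z` and `v` change the proximal terms by exact amounts, because `(1 - β)² + β (2 - β) = 1`.
-/

open scoped RealInnerProductSpace

section Smooth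

variable {E : Type*} [NormedAddCommGroup E] [InnerProductSpace ℝ E] [CompleteSpace E]

theorem hasDerivAt_comp_add_smul_of_hasGradientAt {g : E → ℝ} {G : E → E}
    (hg : ∀ x, HasGradientAt g (G x) x) (a d : E) (t : ℝ) :
    HasDerivAt (fun s : ℝ => g (a + s • d)) ⟪G (a + t • d), d⟫ t := by
  have hline : HasDerivAt (fun s : ℝ => a + s • d) d t := by
    simpa using ((hasDerivAt_id t).smul_const d).const_add a
  simpa [Function.comp_def] using (hg (a + t • d)).hasFDerivAt.comp_hasDerivAt t hline

theorem le_add_inner_add_half_mul_norm_sq_of_lipschitz_gradient {g : E → ℝ} {G : E → E}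
    {L : ℝ} (hg : ∀ x, HasGradientAt g (G x) x) (hG : ∀ x x', ‖G x - G x'‖ ≤ L * ‖x - x'‖)
    (a b : E) : g b ≤ g a + ⟪G a, b - a⟫ + L / 2 * ‖b - a‖ ^ 2 := by
  set d := b - a
  let φ : ℝ → ℝ := fun t => g (a + t • d) - t * ⟪G a, d⟫ - L / 2 * t ^ 2 * ‖d‖ ^ 2
  have hφ : ∀ t, HasDerivAt φ (⟪G (a + t • d), d⟫ - ⟪G a, d⟫ - L * t * ‖d‖ ^ 2) t := by
    intro t
    refine (((hasDerivAt_comp_add_smul_of_hasGradientAt hg a d t).sub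
      ((hasDerivAt_id t).mul_const ⟪G a, d⟫)).sub
      (((hasDerivAt_pow 2 t).const_mul (L / 2)).mul_const (‖d‖ ^ 2))).congr_deriv ?_
    push_cast
    ring
  have hφ'_nonpos : ∀ t ∈ interior (Set.Ici (0 : ℝ)),
      ⟪G (a + t • d), d⟫ - ⟪G a, d⟫ - L * t * ‖d‖ ^ 2 ≤ 0 := by
    intro t ht
    rw [interior_Ici, Set.mem_Ioi] at ht
    rw [sub_nonpos]
    calc ⟪G (a + t • d), d⟫ - ⟪G a, d⟫ = ⟪G (a + t • d) - G a, d⟫ := (inner_sub_left ..).symm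
      _ ≤ ‖G (a + t • d) - G a‖ * ‖d‖ := real_inner_le_norm _ _
      _ ≤ L * ‖t • d‖ * ‖d‖ := by gcongr; simpa using hG (a + t • d) a
      _ = L * t * ‖d‖ ^ 2 := by rw [norm_smul, Real.norm_of_nonneg ht.le]; ring
  have hanti : AntitoneOn φ (Set.Ici 0) :=
    antitoneOn_of_hasDerivWithinAt_nonpos (convex_Ici 0)
      (fun t _ => (hφ t).continuousAt.continuousWithinAt)
      (fun t _ => (hφ t).hasDerivWithinAt) hφ'_nonpos
  have h10 : φ 1 ≤ φ 0 := hanti (Set.mem_Ici.2 le_rfl) (by norm_num) zero_le_one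
  simp only [φ, d, one_smul, add_sub_cancel, one_mul, one_pow, mul_one, zero_smul, add_zero,
    zero_mul, sub_zero, ne_eq, OfNat.ofNat_ne_zero, not_false_eq_true, zero_pow, mul_zero,
    tsub_le_iff_right] at h10
  linarith

theorem add_half_mul_norm_sub_sq_le_of_lipschitz_gradient {g : E → ℝ} {G : E → E} {L : ℝ}
    (hg : ∀ x, HasGradientAt g (G x) x) (hG : ∀ x x', ‖G x - G x'‖ ≤ L * ‖x - x'‖)
    (s : ℝ) (z a b : E) :
    g b + s / 2 * ‖b - z‖ ^ 2 ≤
      g a + s / 2 * ‖a - z‖ ^ 2 + ⟪G a + s • (a - z), b - a⟫ + (L + s) / 2 * ‖b - a‖ ^ 2 := by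
  have hexpand : ‖b - z‖ ^ 2 = ‖b - a‖ ^ 2 + 2 * ⟪a - z, b - a⟫ + ‖a - z‖ ^ 2 := by
    rw [← sub_add_sub_cancel b a z, norm_add_sq_real, real_inner_comm]
  have hdescent := le_add_inner_add_half_mul_norm_sq_of_lipschitz_gradient hg hG a b
  rw [inner_add_left, real_inner_smul_left, hexpand]
  linarith

end Smooth

theorem inner_le_neg_one_div_mul_norm_sq_of_projected_step {E : Type*} [NormedAddCommGroup E]
    [InnerProductSpace ℝ E] {X : Set E} {x p d : E} {c : ℝ} (hc : 0 < c) (hx : x ∈ X)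
    (hp : ∀ w ∈ X, ⟪(x - c • d) - p, w - p⟫ ≤ 0) :
    ⟪d, p - x⟫ ≤ -(1 / c * ‖p - x‖ ^ 2) := by
  have h := hp x hx
  rw [sub_right_comm, inner_sub_left, real_inner_smul_left, real_inner_self_eq_norm_sq,
    ← neg_sub p x, inner_neg_right, norm_neg] at h
  rw [le_neg, one_div_mul_eq_div, div_le_iff₀ hc]
  linarith

theorem norm_sub_sq_add_two_sub_div_mul_norm_sub_sq {E : Type*} [SeminormedAddCommGroup E]
    [NormedSpace ℝ E] {x z w : E} {β : ℝ} (hw : w = z + β • (x - z)) :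
    ‖x - w‖ ^ 2 + (2 - β) / β * ‖w - z‖ ^ 2 = ‖x - z‖ ^ 2 := by
  have hxw : x - w = (1 - β) • (x - z) := by rw [hw, sub_smul, one_smul]; abel
  have hwz : w - z = β • (x - z) := by rw [hw, add_sub_cancel_left]
  rw [hxw, hwz, norm_smul, norm_smul, Real.norm_eq_abs, Real.norm_eq_abs, mul_pow, mul_pow,
    sq_abs, sq_abs]
  rcases eq_or_ne β 0 with rfl | hβ
  · simp
  field_simp
  ring

theorem stmt_9_general
    {E D : Type*} [NormedAddCommGroup E] [InnerProductSpace ℝ E] [CompleteSpace E]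
    [NormedAddCommGroup D] [InnerProductSpace ℝ D] [CompleteSpace D]
    (f : E → D → ℝ) (gx : E → D → E) (gy : E → D → D) (Lx Ly r₁ r₂ c β μ : ℝ)
    (hc : c > 0)
    (X : Set E)
    (hgradx : ∀ x y, HasGradientAt (fun x' => f x' y) (gx x y) x)
    (hgrady : ∀ x y, HasGradientAt (fun y' => f x y') (gy x y) y)
    (hLipx : ∀ x x' y y', ‖gx x y - gx x' y'‖ ≤ Lx * (‖x - x'‖ + ‖y - y'‖))
    (hLipy : ∀ x x' y y', ‖gy x y - gy x' y'‖ ≤ Ly * (‖x - x'‖ + ‖y - y'‖))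
    (F : E → D → E → D → ℝ)
    (hF : ∀ x y z v, F x y z v
      = f x y + r₁ / 2 * ‖x - z‖ ^ 2 - r₂ / 2 * ‖y - v‖ ^ 2)
    (x0 x1 : E) (y0 y1 : D) (z0 z1 : E) (v0 v1 : D)
    (hx0 : x0 ∈ X)
    -- x1 = proj_X (x0 - c • ∇ₓF(x0,y0,z0,v0))
    (hx1proj : ∀ w ∈ X, ⟪(x0 - c • (gx x0 y0 + r₁ • (x0 - z0))) - x1, w - x1⟫ ≤ 0)
    (hz1 : z1 = z0 + β • (x1 - z0))
    (hv1 : v1 = v0 + μ • (y1 - v0)) :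
    F x0 y0 z0 v0 ≥
      F x1 y1 z1 v1 + (1 / c - (Lx + r₁) / 2) * ‖x1 - x0‖ ^ 2 +
        ⟪gy x1 y0 - r₂ • (y0 - v0), y0 - y1⟫ + (r₂ - Ly) / 2 * ‖y1 - y0‖ ^ 2 +
        (2 - β) / (2 * β) * r₁ * ‖z1 - z0‖ ^ 2 +
        (μ - 2) / (2 * μ) * r₂ * ‖v1 - v0‖ ^ 2 := by
  have hx_step := add_half_mul_norm_sub_sq_le_of_lipschitz_gradient (hgradx · y0)
    (fun x x' => by simpa using hLipx x x' y0 y0) r₁ z0 x0 x1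
  have hproj := inner_le_neg_one_div_mul_norm_sq_of_projected_step hc hx0 hx1proj
  have hy_step := add_half_mul_norm_sub_sq_le_of_lipschitz_gradient (hgrady x1 ·)
    (fun y y' => by simpa using hLipy x1 x1 y y') (-r₂) v0 y0 y1
  rw [neg_smul, ← sub_eq_add_neg] at hy_step
  have hz := norm_sub_sq_add_two_sub_div_mul_norm_sub_sq hz1
  have hv := norm_sub_sq_add_two_sub_div_mul_norm_sub_sq hv1
  rw [hF, hF, ← neg_sub y1 y0, inner_neg_right]
  linear_combination hx_step + hproj + hy_step + r₁ / 2 * hz - r₂ / 2 * hv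

/-- Primal descent: one-step descent estimate for the DS-GDA iterates. -/
theorem stmt_9
    {E D : Type*} [NormedAddCommGroup E] [InnerProductSpace ℝ E] [CompleteSpace E]
    [NormedAddCommGroup D] [InnerProductSpace ℝ D] [CompleteSpace D]
    (f : E → D → ℝ) (gx : E → D → E) (gy : E → D → D) (Lx Ly r₁ r₂ c α β μ : ℝ)
    (hc : c > 0) (hα : α > 0) (hβ : 0 < β) (hβ1 : β < 1) (hμ : 0 < μ) (hμ1 : μ < 1)
    (X : Set E) (Y : Set D)
    (hXc : IsCompact X) (hXconv : Convex ℝ X) (hXne : X.Nonempty)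
    (hYc : IsCompact Y) (hYconv : Convex ℝ Y) (hYne : Y.Nonempty)
    (hgradx : ∀ x y, HasGradientAt (fun x' => f x' y) (gx x y) x)
    (hgrady : ∀ x y, HasGradientAt (fun y' => f x y') (gy x y) y)
    (hLipx : ∀ x x' y y', ‖gx x y - gx x' y'‖ ≤ Lx * (‖x - x'‖ + ‖y - y'‖))
    (hLipy : ∀ x x' y y', ‖gy x y - gy x' y'‖ ≤ Ly * (‖x - x'‖ + ‖y - y'‖))
    (F : E → D → E → D → ℝ)
    (hF : ∀ x y z v, F x y z v
      = f x y + r₁ / 2 * ‖x - z‖ ^ 2 - r₂ / 2 * ‖y - v‖ ^ 2)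
    (x0 x1 : E) (y0 y1 : D) (z0 z1 : E) (v0 v1 : D)
    (hx0 : x0 ∈ X) (hy0 : y0 ∈ Y)
    -- x1 = proj_X (x0 - c • ∇ₓF(x0,y0,z0,v0))
    (hx1 : x1 ∈ X)
    (hx1proj : ∀ w ∈ X, ⟪(x0 - c • (gx x0 y0 + r₁ • (x0 - z0))) - x1, w - x1⟫ ≤ 0)
    -- y1 = proj_Y (y0 + α • ∇_yF(x1,y0,z0,v0))
    (hy1 : y1 ∈ Y)
    (hy1proj : ∀ w ∈ Y, ⟪(y0 + α • (gy x1 y0 - r₂ • (y0 - v0))) - y1, w - y1⟫ ≤ 0)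
    (hz1 : z1 = z0 + β • (x1 - z0))
    (hv1 : v1 = v0 + μ • (y1 - v0)) :
    F x0 y0 z0 v0 ≥
      F x1 y1 z1 v1 + (1 / c - (Lx + r₁) / 2) * ‖x1 - x0‖ ^ 2 +
        ⟪gy x1 y0 - r₂ • (y0 - v0), y0 - y1⟫ + (r₂ - Ly) / 2 * ‖y1 - y0‖ ^ 2 +
        (2 - β) / (2 * β) * r₁ * ‖z1 - z0‖ ^ 2 +
        (μ - 2) / (2 * μ) * r₂ * ‖v1 - v0‖ ^ 2 :=
  stmt_9_general f gx gy Lx Ly r₁ r₂ c β μ hc X hgradx hgrady hLipx hLipy F hF x0 x1 y0 y1 z0 z1 v0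
    v1 hx0 hx1proj hz1 hv1
end

section
/- (Proximal descent) Define q(z) := max_v min_{x∈X} max_{y∈Y} F(x,y,z,v), and let x(z,v) be the argmin in x of max_{y∈Y} F(x,y,z,v), v(z) := argmax_v p(z,v) where p(z,v) = min_{x∈X} max_{y∈Y} F(x,y,z,v). Then for all t: q(z^t) ≥ q(z^{t+1}) + (r₁/2)⟨z^t + z^{t+1} − 2x(z^t, v(z^{t+1})), z^t − z^{t+1}⟩. -/
open scoped RealInnerProductSpace

/-- Proximal descent: with `h(x,z,v) = max_{y∈Y} F(x,y,z,v)`,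
`p(z,v) = min_{x∈X} h(x,z,v)` attained at `x(z,v)`, `q(z) = max_v p(z,v)` attained at
`v(z)`, one has `q(z^t) ≥ q(z^{t+1}) + (r₁/2)⟨z^t + z^{t+1} − 2x(z^t, v(z^{t+1})), z^t − z^{t+1}⟩`. -/
theorem stmt_10
    {E D : Type*} [NormedAddCommGroup E] [InnerProductSpace ℝ E] [CompleteSpace E]
    [NormedAddCommGroup D] [InnerProductSpace ℝ D] [CompleteSpace D]
    (f : E → D → ℝ) (gx : E → D → E) (gy : E → D → D) (Lx Ly r₁ r₂ : ℝ)
    (hr₁ : r₁ > Lx) (hr₂ : r₂ > Ly)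
    (X : Set E) (Y : Set D)
    (hXc : IsCompact X) (hXconv : Convex ℝ X) (hXne : X.Nonempty)
    (hYc : IsCompact Y) (hYconv : Convex ℝ Y) (hYne : Y.Nonempty)
    (hgradx : ∀ x y, HasGradientAt (fun x' => f x' y) (gx x y) x)
    (hgrady : ∀ x y, HasGradientAt (fun y' => f x y') (gy x y) y)
    (hLipx : ∀ x x' y y', ‖gx x y - gx x' y'‖ ≤ Lx * (‖x - x'‖ + ‖y - y'‖))
    (hLipy : ∀ x x' y y', ‖gy x y - gy x' y'‖ ≤ Ly * (‖x - x'‖ + ‖y - y'‖))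
    (F : E → D → E → D → ℝ)
    (hF : ∀ x y z v, F x y z v
      = f x y + r₁ / 2 * ‖x - z‖ ^ 2 - r₂ / 2 * ‖y - v‖ ^ 2)
    -- h(x,z,v) = max_{y ∈ Y} F(x,y,z,v), attained at yOf x z v
    (h : E → E → D → ℝ) (yOf : E → E → D → D)
    (hyOf : ∀ x z v, yOf x z v ∈ Y ∧ IsMaxOn (fun y => F x y z v) Y (yOf x z v) ∧
      h x z v = F x (yOf x z v) z v)
    -- p(z,v) = min_{x ∈ X} h(x,z,v), attained at xm z v
    (p : E → D → ℝ) (xm : E → D → E)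
    (hxm : ∀ z v, xm z v ∈ X ∧ IsMinOn (fun x => h x z v) X (xm z v) ∧
      p z v = h (xm z v) z v)
    -- q(z) = max_v p(z,v), attained at vstar z
    (q : E → ℝ) (vstar : E → D)
    (hvstar : ∀ z, IsMaxOn (fun v => p z v) Set.univ (vstar z) ∧ q z = p z (vstar z)) :
    ∀ zt zt1 : E,
      q zt ≥ q zt1 + r₁ / 2 * ⟪zt + zt1 - (2 : ℝ) • xm zt (vstar zt1), zt - zt1⟫ := by
  intro zt zt1
  set v := vstar zt1 with hv
  set x := xm zt v with hx
  -- key: h x' zt v = h x' zt1 v + c for c := r₁/2 * (‖x'-zt‖² - ‖x'-zt1‖²)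
  have hshift : ∀ x' : E, h x' zt v = h x' zt1 v
      + r₁ / 2 * (‖x' - zt‖ ^ 2 - ‖x' - zt1‖ ^ 2) := by
    intro x'
    have hFdiff : ∀ y : D, F x' y zt v = F x' y zt1 v
        + r₁ / 2 * (‖x' - zt‖ ^ 2 - ‖x' - zt1‖ ^ 2) := by
      intro y; rw [hF, hF]; ring
    obtain ⟨hy1mem, hy1max, hy1eq⟩ := hyOf x' zt v
    obtain ⟨hy2mem, hy2max, hy2eq⟩ := hyOf x' zt1 v
    have h1 : F x' (yOf x' zt1 v) zt v ≤ F x' (yOf x' zt v) zt v := hy1max hy2mem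
    have h2 : F x' (yOf x' zt v) zt1 v ≤ F x' (yOf x' zt1 v) zt1 v := hy2max hy1mem
    rw [hy1eq, hy2eq]
    rw [hFdiff] at h1
    have h2' := hFdiff (yOf x' zt v)
    linarith
  obtain ⟨hxmem, hxmin, hxeq⟩ := hxm zt v
  obtain ⟨hx1mem, hx1min, hx1eq⟩ := hxm zt1 v
  have hq1 : q zt1 = p zt1 v := (hvstar zt1).2
  have hq2 : p zt v ≤ q zt := by
    have := (hvstar zt).1 (Set.mem_univ v)
    simpa [(hvstar zt).2] using this
  have hge : p zt1 v ≤ h x zt1 v := by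
    have := hx1min hxmem
    simpa [hx1eq] using this
  have hnorm : ‖x - zt‖ ^ 2 - ‖x - zt1‖ ^ 2
      = ⟪zt + zt1 - (2 : ℝ) • x, zt - zt1⟫ := by
    have e1 : ‖x - zt‖ ^ 2 = ⟪x - zt, x - zt⟫ := (real_inner_self_eq_norm_sq _).symm
    have e2 : ‖x - zt1‖ ^ 2 = ⟪x - zt1, x - zt1⟫ := (real_inner_self_eq_norm_sq _).symm
    rw [e1, e2]
    simp only [inner_sub_left, inner_sub_right, inner_add_left, inner_add_right,
      real_inner_smul_left, real_inner_smul_right, real_inner_comm x zt,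
      real_inner_comm x zt1, real_inner_comm zt zt1]
    ring
  have key : p zt v = h x zt1 v + r₁ / 2 * ⟪zt + zt1 - (2 : ℝ) • x, zt - zt1⟫ := by
    rw [hxeq, hshift x, hnorm]
  have : q zt1 + r₁ / 2 * ⟪zt + zt1 - (2 : ℝ) • x, zt - zt1⟫ ≤ p zt v := by
    rw [key, hq1]; linarith
  linarith
end

section
/- (Stationarity translation) If max{‖x^t−x^{t+1}‖/c, ‖y^t−y₊^t(z^t,v^t)‖/α, ‖z^t−z^{t+1}‖/β, ‖v^t−v^{t+1}‖/μ} ≤ ε for DS-GDA iterates, then there exists ρ > 0 (depending only on c, α, r₁, r₂, L_x, L_y) such that (x^{t+1}, y^{t+1}) is a ρε-game stationary point, i.e., dist(0, ∇_x f(x^{t+1},y^{t+1}) + ∂𝟙_X(x^{t+1})) ≤ ρε and dist(0, −∇_y f(x^{t+1},y^{t+1}) + ∂𝟙_Y(y^{t+1})) ≤ ρε. -/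
open scoped RealInnerProductSpace

private lemma sq_cancel' {a b : ℝ} (ha : 0 ≤ a) (hb : 0 ≤ b) (h : a * a ≤ b * a) : a ≤ b := by
  rcases ha.eq_or_lt with h0 | h0
  · simpa [← h0] using hb
  · exact le_of_mul_le_mul_right h h0

private lemma proj_nonexpansive' {V : Type*} [NormedAddCommGroup V] [InnerProductSpace ℝ V]
    {Y : Set V} {p1 p2 q1 q2 : V} (hq1 : q1 ∈ Y) (hq2 : q2 ∈ Y)
    (hv1 : ∀ w ∈ Y, ⟪p1 - q1, w - q1⟫ ≤ 0) (hv2 : ∀ w ∈ Y, ⟪p2 - q2, w - q2⟫ ≤ 0) :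
    ‖q1 - q2‖ ≤ ‖p1 - p2‖ := by
  have h1 := hv1 q2 hq2
  have h2 := hv2 q1 hq1
  have key : ‖q1 - q2‖ * ‖q1 - q2‖ ≤ ⟪p1 - p2, q1 - q2⟫ := by
    have e : ⟪p1 - p2, q1 - q2⟫ - ⟪q1 - q2, q1 - q2⟫
        = -⟪p1 - q1, q2 - q1⟫ - ⟪p2 - q2, q1 - q2⟫ := by
      simp only [inner_sub_left, inner_sub_right]
      rw [real_inner_comm q2 q1]
      ring
    have := real_inner_self_eq_norm_mul_norm (q1 - q2)
    linarith
  have h3 := real_inner_le_norm (p1 - p2) (q1 - q2)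
  exact sq_cancel' (norm_nonneg _) (norm_nonneg _) (by linarith)

private lemma min_vi' {E : Type*} [NormedAddCommGroup E] [NormedSpace ℝ E]
    {φ : E → ℝ} {Dφ : E →L[ℝ] ℝ} {s : Set E} (hconv : Convex ℝ s) {a : E} (ha : a ∈ s)
    (hmin : IsMinOn φ s a) (hg : HasFDerivAt φ Dφ a) {w : E} (hw : w ∈ s) :
    0 ≤ Dφ (w - a) := by
  have hloc : IsLocalMinOn φ s a := hmin.filter_mono inf_le_right
  exact hloc.hasFDerivWithinAt_nonneg hg.hasFDerivWithinAt
    (sub_mem_posTangentConeAt_of_segment_subset (hconv.segment_subset ha hw))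

private lemma grad_quad' {E : Type*} [NormedAddCommGroup E] [InnerProductSpace ℝ E]
    [CompleteSpace E]
    {f1 : E → ℝ} {g1 : E} (a z0 : E) (r₁ C : ℝ) (h1 : HasGradientAt f1 g1 a) :
    ∃ D : E →L[ℝ] ℝ, HasFDerivAt (fun x => f1 x + r₁ / 2 * ‖x - z0‖ ^ 2 - C) D a ∧
      ∀ u, D u = ⟪g1 + r₁ • (a - z0), u⟫ := by
  have h2 : HasFDerivAt (fun x : E => ‖x - z0‖ ^ 2)
      (2 • (innerSL ℝ (a - z0)).comp (ContinuousLinearMap.id ℝ E)) a := by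
    simpa using ((hasFDerivAt_id a).sub_const z0).norm_sq
  have h1' := h1.hasFDerivAt
  refine ⟨_, (h1'.add (h2.const_mul (r₁ / 2))).sub_const C, fun u => ?_⟩
  simp [inner_add_left, real_inner_smul_left, InnerProductSpace.toDual_apply_apply]
  rw [inner_sub_left]; ring

set_option maxHeartbeats 1000000 in
/-- Stationarity translation: if the DS-GDA displacement measures are
all at most `ε`, then `(x^{t+1}, y^{t+1})` is a `ρε`-game stationary point for some
`ρ > 0` depending only on the problem/algorithm constants. -/
theorem stmt_15
    {E D : Type*} [NormedAddCommGroup E] [InnerProductSpace ℝ E] [CompleteSpace E]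
    [NormedAddCommGroup D] [InnerProductSpace ℝ D] [CompleteSpace D]
    (f : E → D → ℝ) (gx : E → D → E) (gy : E → D → D) (Lx Ly r₁ r₂ c α β μ : ℝ)
    (hr₁ : r₁ > Lx) (hr₂ : r₂ > Ly)
    (hc : c > 0) (hα : α > 0) (hβ : 0 < β) (hβ1 : β < 1) (hμ : 0 < μ) (hμ1 : μ < 1)
    (X : Set E) (Y : Set D)
    (hXc : IsCompact X) (hXconv : Convex ℝ X) (hXne : X.Nonempty)
    (hYc : IsCompact Y) (hYconv : Convex ℝ Y) (hYne : Y.Nonempty)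
    (hgradx : ∀ x y, HasGradientAt (fun x' => f x' y) (gx x y) x)
    (hgrady : ∀ x y, HasGradientAt (fun y' => f x y') (gy x y) y)
    (hLipx : ∀ x x' y y', ‖gx x y - gx x' y'‖ ≤ Lx * (‖x - x'‖ + ‖y - y'‖))
    (hLipy : ∀ x x' y y', ‖gy x y - gy x' y'‖ ≤ Ly * (‖x - x'‖ + ‖y - y'‖))
    (F : E → D → E → D → ℝ)
    (hF : ∀ x y z v, F x y z v
      = f x y + r₁ / 2 * ‖x - z‖ ^ 2 - r₂ / 2 * ‖y - v‖ ^ 2)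
    -- x(y,z,v) = argmin_{x∈X} F(x,y,z,v)
    (xOf : D → E → D → E)
    (hxOf : ∀ y z v, xOf y z v ∈ X ∧ IsMinOn (fun x => F x y z v) X (xOf y z v)) :
    ∃ ρ > (0 : ℝ),
      ∀ (x0 x1 : E) (y0 y1 yplus : D) (z0 z1 : E) (v0 v1 : D) (ε : ℝ),
        x0 ∈ X → y0 ∈ Y →
        -- x1 = proj_X (x0 - c∇ₓF(x0,y0,z0,v0))
        x1 ∈ X →
        (∀ w ∈ X, ⟪(x0 - c • (gx x0 y0 + r₁ • (x0 - z0))) - x1, w - x1⟫ ≤ 0) →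
        -- y1 = proj_Y (y0 + α∇_yF(x1,y0,z0,v0))
        y1 ∈ Y →
        (∀ w ∈ Y, ⟪(y0 + α • (gy x1 y0 - r₂ • (y0 - v0))) - y1, w - y1⟫ ≤ 0) →
        -- y₊^t(z0,v0) = proj_Y (y0 + α∇_yF(x(y0,z0,v0),y0,z0,v0))
        yplus ∈ Y →
        (∀ w ∈ Y,
          ⟪(y0 + α • (gy (xOf y0 z0 v0) y0 - r₂ • (y0 - v0))) - yplus, w - yplus⟫ ≤ 0) →
        z1 = z0 + β • (x1 - z0) →
        v1 = v0 + μ • (y1 - v0) →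
        ‖x0 - x1‖ / c ≤ ε → ‖y0 - yplus‖ / α ≤ ε →
        ‖z0 - z1‖ / β ≤ ε → ‖v0 - v1‖ / μ ≤ ε →
        Metric.infDist (0 : E)
            {g | ∃ n : E, (∀ w ∈ X, ⟪n, w - x1⟫ ≤ 0) ∧ g = gx x1 y1 + n} ≤ ρ * ε ∧
        Metric.infDist (0 : D)
            {g | ∃ n : D, (∀ w ∈ Y, ⟪n, w - y1⟫ ≤ 0) ∧ g = -(gy x1 y1) + n} ≤ ρ * ε := by
  have hL1n : (0:ℝ) ≤ max Lx 0 := le_max_right _ _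
  have hL2n : (0:ℝ) ≤ max Ly 0 := le_max_right _ _
  have hR1n : (0:ℝ) ≤ |r₁| := abs_nonneg _
  have hR2n : (0:ℝ) ≤ |r₂| := abs_nonneg _
  have hden : (0:ℝ) < r₁ - Lx := sub_pos.2 hr₁
  set L1 := max Lx 0 with hL1def
  set L2 := max Ly 0 with hL2def
  set R1 := |r₁| with hR1def
  set R2 := |r₂| with hR2def
  set K := (1 + c * (L1 + R1)) / (r₁ - Lx) with hKdef
  have hKn : 0 ≤ K := div_nonneg (by nlinarith [mul_nonneg hc.le (add_nonneg hL1n hR1n)]) hden.le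
  set Cy := α * (1 + L2 * K) with hCydef
  have hCyn : 0 ≤ Cy := mul_nonneg hα.le (by nlinarith [mul_nonneg hL2n hKn])
  set ρx := L1 * (c + Cy) + 1 + R1 * (c + 1) with hρxdef
  set ρy := L2 * Cy + Cy / α + R2 * (Cy + 1) with hρydef
  have hρx1 : 1 ≤ ρx := by
    rw [hρxdef]
    have h1 := mul_nonneg hL1n (add_nonneg hc.le hCyn)
    have h2 := mul_nonneg hR1n (by linarith : (0:ℝ) ≤ c + 1)
    linarith
  have hρyn : 0 ≤ ρy := by
    rw [hρydef]
    have h1 := div_nonneg hCyn hα.le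
    have h2 := mul_nonneg hL2n hCyn
    have h3 := mul_nonneg hR2n (by linarith : (0:ℝ) ≤ Cy + 1)
    linarith
  clear_value L1 L2 R1 R2 K Cy ρx ρy
  refine ⟨max ρx ρy, lt_of_lt_of_le one_pos (le_trans hρx1 (le_max_left _ _)), ?_⟩
  intro x0 x1 y0 y1 yplus z0 z1 v0 v1 ε hx0X hy0Y hx1X hVIx hy1Y hVIy hyplusY hVIyp
    hz1 hv1eq hεx hεyp hεz hεv
  have hε0 : 0 ≤ ε := le_trans (div_nonneg (norm_nonneg _) hc.le) hεx
  have hxx : ‖x0 - x1‖ ≤ c * ε := by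
    rw [div_le_iff₀ hc] at hεx; linarith [hεx, mul_comm ε c]
  have hyp : ‖y0 - yplus‖ ≤ α * ε := by
    rw [div_le_iff₀ hα] at hεyp; linarith [mul_comm ε α]
  have hx1z0 : ‖x1 - z0‖ ≤ ε := by
    have e : ‖z0 - z1‖ = β * ‖x1 - z0‖ := by
      rw [hz1, sub_add_cancel_left, norm_neg, norm_smul, Real.norm_eq_abs, abs_of_pos hβ]
    rw [e] at hεz
    rwa [mul_comm, mul_div_assoc, div_self hβ.ne', mul_one] at hεz
  have hy1v0 : ‖y1 - v0‖ ≤ ε := by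
    have e : ‖v0 - v1‖ = μ * ‖y1 - v0‖ := by
      rw [hv1eq, sub_add_cancel_left, norm_neg, norm_smul, Real.norm_eq_abs, abs_of_pos hμ]
    rw [e] at hεv
    rwa [mul_comm, mul_div_assoc, div_self hμ.ne', mul_one] at hεv
  have hx0z0 : ‖x0 - z0‖ ≤ (c + 1) * ε := by
    have e : x0 - z0 = (x0 - x1) + (x1 - z0) := by abel
    have := norm_add_le (x0 - x1) (x1 - z0)
    rw [← e] at this
    linarith
  -- first-order optimality of xs := xOf y0 z0 v0
  obtain ⟨hxsX, hxsmin⟩ := hxOf y0 z0 v0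
  set xs := xOf y0 z0 v0 with hxsdef
  obtain ⟨Dφ, hDφ, hDval⟩ := grad_quad' xs z0 r₁ (r₂ / 2 * ‖y0 - v0‖ ^ 2) (hgradx xs y0)
  have hFeq : (fun x => F x y0 z0 v0)
      = fun x => f x y0 + r₁ / 2 * ‖x - z0‖ ^ 2 - r₂ / 2 * ‖y0 - v0‖ ^ 2 :=
    funext fun x => hF x y0 z0 v0
  rw [hFeq] at hxsmin
  have hVIopt : ∀ w ∈ X, 0 ≤ ⟪gx xs y0 + r₁ • (xs - z0), w - xs⟫ := by
    intro w hw
    have := min_vi' hXconv hxsX hxsmin hDφ hw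
    rwa [hDval] at this
  -- quantitative bound ‖x1 - xs‖ ≤ K * ε
  set G0 := gx x0 y0 + r₁ • (x0 - z0) with hG0def
  set G1 := gx x1 y0 + r₁ • (x1 - z0) with hG1def
  set Gs := gx xs y0 + r₁ • (xs - z0) with hGsdef
  set q := x1 - xs with hqdef
  have key1 : c * ⟪G0, q⟫ ≤ ⟪x0 - x1, q⟫ := by
    have h := hVIx xs hxsX
    have e : (x0 - c • G0) - x1 = (x0 - x1) - c • G0 := sub_right_comm _ _ _
    have e2 : xs - x1 = -q := by rw [hqdef]; abel
    rw [e, e2, inner_neg_right, inner_sub_left, real_inner_smul_left] at h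
    linarith
  have key2 : (0:ℝ) ≤ ⟪Gs, q⟫ := hVIopt x1 hx1X
  have key3 : (r₁ - Lx) * (‖q‖ * ‖q‖) ≤ ⟪G1, q⟫ - ⟪Gs, q⟫ := by
    have e : G1 - Gs = (gx x1 y0 - gx xs y0) + r₁ • q := by
      rw [hG1def, hGsdef, hqdef]; module
    have hl := hLipx x1 xs y0 y0
    simp only [sub_self, norm_zero, add_zero] at hl
    have habs := abs_real_inner_le_norm (gx x1 y0 - gx xs y0) q
    have hself := real_inner_self_eq_norm_mul_norm q
    have hexp : ⟪G1, q⟫ - ⟪Gs, q⟫ = ⟪gx x1 y0 - gx xs y0, q⟫ + r₁ * ⟪q, q⟫ := by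
      rw [← inner_sub_left, e, inner_add_left, real_inner_smul_left]
    have hlow : -(Lx * ‖q‖) * ‖q‖ ≤ ⟪gx x1 y0 - gx xs y0, q⟫ := by
      have h1 : -|⟪gx x1 y0 - gx xs y0, q⟫| ≤ ⟪gx x1 y0 - gx xs y0, q⟫ := neg_abs_le _
      have h2 : ‖gx x1 y0 - gx xs y0‖ * ‖q‖ ≤ Lx * ‖x1 - xs‖ * ‖q‖ :=
        mul_le_mul_of_nonneg_right hl (norm_nonneg _)
      have h3 : Lx * ‖x1 - xs‖ * ‖q‖ = (Lx * ‖q‖) * ‖q‖ := by rw [hqdef]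
      linarith
    rw [hself] at hexp
    linarith
  have key4 : -((L1 + R1) * (c * ε)) * ‖q‖ ≤ ⟪G0, q⟫ - ⟪G1, q⟫ := by
    have e : G0 - G1 = (gx x0 y0 - gx x1 y0) + r₁ • (x0 - x1) := by
      rw [hG0def, hG1def]; module
    have hl := hLipx x0 x1 y0 y0
    simp only [sub_self, norm_zero, add_zero] at hl
    have hn : ‖G0 - G1‖ ≤ (L1 + R1) * (c * ε) := by
      rw [e]
      have := norm_add_le (gx x0 y0 - gx x1 y0) (r₁ • (x0 - x1))
      have hs : ‖r₁ • (x0 - x1)‖ = R1 * ‖x0 - x1‖ := by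
        rw [norm_smul, Real.norm_eq_abs, hR1def]
      have hLx1 : Lx ≤ L1 := by rw [hL1def]; exact le_max_left _ _
      have p1 : Lx * ‖x0 - x1‖ ≤ L1 * ‖x0 - x1‖ :=
        mul_le_mul_of_nonneg_right hLx1 (norm_nonneg _)
      have p2 : L1 * ‖x0 - x1‖ ≤ L1 * (c * ε) := mul_le_mul_of_nonneg_left hxx hL1n
      have p3 : R1 * ‖x0 - x1‖ ≤ R1 * (c * ε) := mul_le_mul_of_nonneg_left hxx hR1n
      linarith
    have habs := abs_real_inner_le_norm (G0 - G1) q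
    have hexp : ⟪G0, q⟫ - ⟪G1, q⟫ = ⟪G0 - G1, q⟫ := (inner_sub_left _ _ _).symm
    have h2 : ‖G0 - G1‖ * ‖q‖ ≤ ((L1 + R1) * (c * ε)) * ‖q‖ :=
      mul_le_mul_of_nonneg_right hn (norm_nonneg _)
    linarith [neg_abs_le ⟪G0 - G1, q⟫]
  have key5 : ⟪x0 - x1, q⟫ ≤ (c * ε) * ‖q‖ := by
    have := real_inner_le_norm (x0 - x1) q
    have h2 : ‖x0 - x1‖ * ‖q‖ ≤ (c * ε) * ‖q‖ :=
      mul_le_mul_of_nonneg_right hxx (norm_nonneg _)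
    linarith
  have hq : ‖q‖ ≤ K * ε := by
    have hmain : c * ((r₁ - Lx) * (‖q‖ * ‖q‖)) ≤ c * ((1 + c * (L1 + R1)) * ε * ‖q‖) := by
      have h3c := mul_le_mul_of_nonneg_left key3 hc.le
      have h4c := mul_le_mul_of_nonneg_left key4 hc.le
      have h2c : 0 ≤ c * ⟪Gs, q⟫ := mul_nonneg hc.le key2
      nlinarith [key1, key5]
    have hmain2 : (r₁ - Lx) * (‖q‖ * ‖q‖) ≤ (1 + c * (L1 + R1)) * ε * ‖q‖ :=
      le_of_mul_le_mul_left hmain hc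
    have hsq : ‖q‖ * ‖q‖ ≤ (K * ε) * ‖q‖ := by
      rw [hKdef, div_mul_eq_mul_div, div_mul_eq_mul_div, le_div_iff₀ hden]
      nlinarith [hmain2]
    exact sq_cancel' (norm_nonneg _) (mul_nonneg hKn hε0) hsq
  -- y1 close to yplus
  have hyy1 : ‖y1 - yplus‖ ≤ α * (L2 * (K * ε)) := by
    have hne := proj_nonexpansive' hy1Y hyplusY hVIy hVIyp
    have e : (y0 + α • (gy x1 y0 - r₂ • (y0 - v0)))
        - (y0 + α • (gy xs y0 - r₂ • (y0 - v0))) = α • (gy x1 y0 - gy xs y0) := by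
      module
    rw [e] at hne
    have hl := hLipy x1 xs y0 y0
    simp only [sub_self, norm_zero, add_zero] at hl
    have hLy2 : Ly ≤ L2 := by rw [hL2def]; exact le_max_left _ _
    have hns : ‖α • (gy x1 y0 - gy xs y0)‖ = α * ‖gy x1 y0 - gy xs y0‖ := by
      rw [norm_smul, Real.norm_eq_abs, abs_of_pos hα]
    have hd1 : ‖gy x1 y0 - gy xs y0‖ ≤ L2 * (K * ε) := by
      have s1 : Ly * ‖x1 - xs‖ ≤ L2 * ‖x1 - xs‖ :=
        mul_le_mul_of_nonneg_right hLy2 (norm_nonneg _)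
      have s2 : L2 * ‖x1 - xs‖ ≤ L2 * (K * ε) := by
        have : ‖x1 - xs‖ ≤ K * ε := by rw [← hqdef] at *; exact hq
        exact mul_le_mul_of_nonneg_left this hL2n
      linarith
    calc ‖y1 - yplus‖ ≤ α * ‖gy x1 y0 - gy xs y0‖ := by rw [← hns]; exact hne
      _ ≤ α * (L2 * (K * ε)) := mul_le_mul_of_nonneg_left hd1 hα.le
  have hy01 : ‖y0 - y1‖ ≤ Cy * ε := by
    have e : y0 - y1 = (y0 - yplus) + (yplus - y1) := by abel
    have ht := norm_add_le (y0 - yplus) (yplus - y1)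
    rw [← e] at ht
    have hrev : ‖yplus - y1‖ = ‖y1 - yplus‖ := norm_sub_rev _ _
    rw [hCydef]
    nlinarith [hyp, hyy1]
  have hy0v0 : ‖y0 - v0‖ ≤ (Cy + 1) * ε := by
    have e : y0 - v0 = (y0 - y1) + (y1 - v0) := by abel
    have ht := norm_add_le (y0 - y1) (y1 - v0)
    rw [← e] at ht
    linarith
  constructor
  · -- x-stationarity
    set nx := c⁻¹ • ((x0 - c • (gx x0 y0 + r₁ • (x0 - z0))) - x1) with hnxdef
    have hnx : ∀ w ∈ X, ⟪nx, w - x1⟫ ≤ 0 := by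
      intro w hw
      rw [hnxdef, real_inner_smul_left]
      exact mul_nonpos_iff.mpr (Or.inl ⟨inv_nonneg.2 hc.le, hVIx w hw⟩)
    have hmem : gx x1 y1 + nx ∈
        {g | ∃ n : E, (∀ w ∈ X, ⟪n, w - x1⟫ ≤ 0) ∧ g = gx x1 y1 + n} := ⟨nx, hnx, rfl⟩
    have h1 := Metric.infDist_le_dist_of_mem (x := (0 : E)) hmem
    rw [dist_zero_left] at h1
    have e : gx x1 y1 + nx
        = (gx x1 y1 - gx x0 y0) + (c⁻¹ • (x0 - x1) - r₁ • (x0 - z0)) := by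
      rw [hnxdef]
      match_scalars <;> (field_simp; try ring)
    have hb : ‖gx x1 y1 + nx‖ ≤ ρx * ε := by
      rw [e]
      have t1 := norm_add_le (gx x1 y1 - gx x0 y0) (c⁻¹ • (x0 - x1) - r₁ • (x0 - z0))
      have t2 := norm_sub_le (c⁻¹ • (x0 - x1)) (r₁ • (x0 - z0))
      have b1 : ‖gx x1 y1 - gx x0 y0‖ ≤ L1 * (c * ε + Cy * ε) := by
        have hl := hLipx x1 x0 y1 y0
        have hLx1 : Lx ≤ L1 := by rw [hL1def]; exact le_max_left _ _
        have h1' : ‖x1 - x0‖ ≤ c * ε := by rwa [norm_sub_rev]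
        have h2' : ‖y1 - y0‖ ≤ Cy * ε := by rwa [norm_sub_rev]
        have p1 : Lx * (‖x1 - x0‖ + ‖y1 - y0‖) ≤ L1 * (‖x1 - x0‖ + ‖y1 - y0‖) :=
          mul_le_mul_of_nonneg_right hLx1
            (add_nonneg (norm_nonneg _) (norm_nonneg _))
        have p2 : L1 * (‖x1 - x0‖ + ‖y1 - y0‖) ≤ L1 * (c * ε + Cy * ε) :=
          mul_le_mul_of_nonneg_left (by linarith) hL1n
        linarith
      have b2 : ‖c⁻¹ • (x0 - x1)‖ ≤ ε := by
        rw [norm_smul, Real.norm_eq_abs, abs_of_pos (inv_pos.2 hc)]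
        rw [div_le_iff₀ hc] at hεx
        calc c⁻¹ * ‖x0 - x1‖ ≤ c⁻¹ * (ε * c) :=
              mul_le_mul_of_nonneg_left hεx (inv_nonneg.2 hc.le)
          _ = ε := by field_simp
      have b3 : ‖r₁ • (x0 - z0)‖ ≤ R1 * ((c + 1) * ε) := by
        rw [norm_smul, Real.norm_eq_abs, ← hR1def]
        exact mul_le_mul_of_nonneg_left hx0z0 hR1n
      rw [hρxdef]
      linarith
    have : ρx * ε ≤ max ρx ρy * ε :=
      mul_le_mul_of_nonneg_right (le_max_left _ _) hε0
    linarith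
  · -- y-stationarity
    set ny := α⁻¹ • ((y0 + α • (gy x1 y0 - r₂ • (y0 - v0))) - y1) with hnydef
    have hny : ∀ w ∈ Y, ⟪ny, w - y1⟫ ≤ 0 := by
      intro w hw
      rw [hnydef, real_inner_smul_left]
      exact mul_nonpos_iff.mpr (Or.inl ⟨inv_nonneg.2 hα.le, hVIy w hw⟩)
    have hmem : -(gy x1 y1) + ny ∈
        {g | ∃ n : D, (∀ w ∈ Y, ⟪n, w - y1⟫ ≤ 0) ∧ g = -(gy x1 y1) + n} := ⟨ny, hny, rfl⟩
    have h1 := Metric.infDist_le_dist_of_mem (x := (0 : D)) hmem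
    rw [dist_zero_left] at h1
    have e : -(gy x1 y1) + ny
        = (gy x1 y0 - gy x1 y1) + (α⁻¹ • (y0 - y1) - r₂ • (y0 - v0)) := by
      rw [hnydef]
      match_scalars <;> (field_simp; try ring)
    have hb : ‖-(gy x1 y1) + ny‖ ≤ ρy * ε := by
      rw [e]
      have t1 := norm_add_le (gy x1 y0 - gy x1 y1) (α⁻¹ • (y0 - y1) - r₂ • (y0 - v0))
      have t2 := norm_sub_le (α⁻¹ • (y0 - y1)) (r₂ • (y0 - v0))
      have b1 : ‖gy x1 y0 - gy x1 y1‖ ≤ L2 * (Cy * ε) := by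
        have hl := hLipy x1 x1 y0 y1
        simp only [sub_self, norm_zero, zero_add] at hl
        have hLy2 : Ly ≤ L2 := by rw [hL2def]; exact le_max_left _ _
        have p1 : Ly * ‖y0 - y1‖ ≤ L2 * ‖y0 - y1‖ :=
          mul_le_mul_of_nonneg_right hLy2 (norm_nonneg _)
        have p2 : L2 * ‖y0 - y1‖ ≤ L2 * (Cy * ε) := mul_le_mul_of_nonneg_left hy01 hL2n
        linarith
      have b2 : ‖α⁻¹ • (y0 - y1)‖ ≤ (Cy / α) * ε := by
        rw [norm_smul, Real.norm_eq_abs, abs_of_pos (inv_pos.2 hα)]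
        calc α⁻¹ * ‖y0 - y1‖ ≤ α⁻¹ * (Cy * ε) :=
              mul_le_mul_of_nonneg_left hy01 (inv_nonneg.2 hα.le)
          _ = (Cy / α) * ε := by field_simp
      have b3 : ‖r₂ • (y0 - v0)‖ ≤ R2 * ((Cy + 1) * ε) := by
        rw [norm_smul, Real.norm_eq_abs, ← hR2def]
        exact mul_le_mul_of_nonneg_left hy0v0 hR2n
      rw [hρydef]
      linarith
    have : ρy * ε ≤ max ρx ρy * ε :=
      mul_le_mul_of_nonneg_right (le_max_right _ _) hε0
    linarith
end

section
/- (GS implies OS under KŁ) Suppose f(x,·) satisfies the KŁ property with exponent θ. If (x,y) ∈ X × Y is an ε-game stationary point (dist(0,∇_x f(x,y)+∂𝟙_X(x)) ≤ ε and dist(0,−∇_y f(x,y)+∂𝟙_Y(y)) ≤ ε), then it is an O(ε^{min{1, 1/(2θ)}})-optimization stationary point, i.e., ‖prox_{(max_{y∈Y} f(·,y))/r₁ + 𝟙_X}(x) − x‖ ≤ O(ε^{min{1,1/(2θ)}}). -/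
open scoped RealInnerProductSpace

/-! Let `x⁺ = xstar x` and `δ = ‖x⁺ − x‖`. Comparing the proximal objective at `x⁺` and at `x`,
and bounding `f(x⁺,y)` from below by the quadratic lower model of `f(·,y)` at `x`, gives
`(r₁/2) δ² ≤ (max f(x,·) − f(x,y)) + ⟪∇ₓf(x,y), x − x⁺⟫ + (Lₓ/2) δ²`.
The primal stationarity bounds the inner product by `ε δ`, and the KŁ inequality turns the
dual stationarity into the bound `(ε/τ)^{1/θ}` on the dual gap. Solving the resulting quadratic
inequality gives `δ = O(ε + ε^{1/(2θ)})`, which is `O(ε^{min(1, 1/(2θ))})` for `ε ≤ 1`;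
for `ε > 1` the diameter of `X` bounds `δ`. -/

theorem le_sq_rpow_of_rpow_le {t b θ : ℝ} (ht : 0 ≤ t) (hb : 0 ≤ b) (hθ : 0 < θ)
    (h : t ^ θ ≤ b) : t ≤ (b ^ (1 / (2 * θ))) ^ 2 := by
  rw [← Real.rpow_natCast, ← Real.rpow_mul hb]
  convert (Real.le_rpow_inv_iff_of_pos ht hb hθ).2 h using 2
  push_cast
  field_simp

theorem le_div_add_div_sqrt_of_mul_sq_le {μ δ q ε : ℝ} (hμ : 0 < μ)
    (hq : 0 ≤ q) (hε : 0 ≤ ε) (h : μ * δ ^ 2 ≤ q ^ 2 + ε * δ) : δ ≤ ε / μ + q / √μ := by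
  by_contra! hlt
  have hs : 0 < √μ := Real.sqrt_pos.2 hμ
  have hμs : √μ ^ 2 = μ := Real.sq_sqrt hμ.le
  have hfirst : ε + √μ * q < μ * δ := by
    have := mul_lt_mul_of_pos_left hlt hμ
    have hμq : μ * (q / √μ) = √μ * q := by field_simp; rw [hμs, mul_comm]
    rw [mul_add, mul_div_cancel₀ _ hμ.ne', hμq] at this
    exact this
  have hsecond : q < √μ * δ := by
    rw [← div_lt_iff₀' hs]
    exact lt_of_le_of_lt (le_add_of_nonneg_left (by positivity)) hlt
  nlinarith [mul_le_mul_of_nonneg_left hsecond.le hq]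

theorem le_mul_rpow_min_of_le {δ ε A B R p : ℝ} (hε : 0 ≤ ε) (hp : 0 < p) (hA : 0 ≤ A)
    (hB : 0 ≤ B) (hR : 0 ≤ R) (hsmall : δ ≤ A * ε + B * ε ^ p) (hbdd : δ ≤ R) :
    δ ≤ (A + B + R) * ε ^ min 1 p := by
  have hm : 0 < min 1 p := lt_min one_pos hp
  have hεm : 0 ≤ ε ^ min 1 p := Real.rpow_nonneg hε _
  rcases le_or_gt ε 1 with hε1 | hε1
  · have h1 : ε ≤ ε ^ min 1 p := by
      simpa using Real.rpow_le_rpow_of_exponent_ge' hε hε1 hm.le (min_le_left 1 p)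
    have h2 : ε ^ p ≤ ε ^ min 1 p :=
      Real.rpow_le_rpow_of_exponent_ge' hε hε1 hm.le (min_le_right 1 p)
    nlinarith [mul_le_mul_of_nonneg_left h1 hA, mul_le_mul_of_nonneg_left h2 hB]
  · have h1 : 1 ≤ ε ^ min 1 p := Real.one_le_rpow hε1.le hm.le
    nlinarith

theorem IsMaxOn.sub_le_of_lojasiewicz {D : Type*} {ψ : D → ℝ} {Y : Set D} {y ymax : D}
    {θ τ r ε : ℝ} (hmax : IsMaxOn ψ Y ymax) (hymax : ymax ∈ Y) (hy : y ∈ Y) (hθ : 0 < θ)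
    (hτ : 0 < τ) (hKL : (sSup (ψ '' Y) - ψ y) ^ θ ≤ 1 / τ * r) (hr : r ≤ ε) :
    ψ ymax - ψ y ≤ ((ε / τ) ^ (1 / (2 * θ))) ^ 2 := by
  have hsSup : sSup (ψ '' Y) = ψ ymax :=
    IsGreatest.csSup_eq ⟨Set.mem_image_of_mem ψ hymax,
      Set.forall_mem_image.2 fun _ hw => isMaxOn_iff.1 hmax _ hw⟩
  have hgap : 0 ≤ ψ ymax - ψ y := sub_nonneg.2 (isMaxOn_iff.1 hmax y hy)
  have hrpow : (ψ ymax - ψ y) ^ θ ≤ ε / τ :=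
    calc (ψ ymax - ψ y) ^ θ ≤ 1 / τ * r := hsSup ▸ hKL
      _ ≤ 1 / τ * ε := by gcongr
      _ = ε / τ := by ring
  exact le_sq_rpow_of_rpow_le hgap ((Real.rpow_nonneg hgap θ).trans hrpow) hθ hrpow

section InnerProductSpace

variable {E : Type*} [NormedAddCommGroup E] [InnerProductSpace ℝ E]

theorem lower_quadratic_bound_of_lipschitz_gradient [CompleteSpace E] {g : E → ℝ} {g' : E → E}
    {L : ℝ} (hg : ∀ u, HasGradientAt g (g' u) u) (hL : ∀ u u', ‖g' u - g' u'‖ ≤ L * ‖u - u'‖)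
    (x x' : E) : g x + ⟪g' x, x' - x⟫ - L / 2 * ‖x' - x‖ ^ 2 ≤ g x' := by
  set v := x' - x
  set ψ : ℝ → ℝ := fun t => g (x + t • v) - t * ⟪g' x, v⟫ + L * ‖v‖ ^ 2 / 2 * t ^ 2
  have hψ : ∀ t : ℝ, HasDerivAt ψ (⟪g' (x + t • v), v⟫ - ⟪g' x, v⟫ + L * ‖v‖ ^ 2 * t) t := by
    intro t
    have hline : HasDerivAt (fun t : ℝ => x + t • v) v t := by
      simpa using ((hasDerivAt_id t).smul_const v).const_add x
    have hgline : HasDerivAt (fun t : ℝ => g (x + t • v)) ⟪g' (x + t • v), v⟫ t := by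
      simpa [InnerProductSpace.toDual_apply_apply, Function.comp_def] using
        (hg (x + t • v)).hasFDerivAt.comp_hasDerivAt t hline
    exact ((hgline.sub ((hasDerivAt_id t).mul_const ⟪g' x, v⟫)).add
      ((hasDerivAt_pow 2 t).const_mul (L * ‖v‖ ^ 2 / 2))).congr_deriv (by simp; ring)
  have hmono : MonotoneOn ψ (Set.Icc 0 1) := by
    refine monotoneOn_of_deriv_nonneg (convex_Icc 0 1)
      (fun t _ => (hψ t).continuousAt.continuousWithinAt)
      (fun t _ => (hψ t).differentiableAt.differentiableWithinAt) fun t ht => ?_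
    rw [interior_Icc] at ht
    rw [(hψ t).deriv]
    have hlip : ‖g' (x + t • v) - g' x‖ ≤ L * (t * ‖v‖) := by
      simpa [norm_smul, abs_of_pos ht.1] using hL (x + t • v) x
    have hcs : -(‖g' (x + t • v) - g' x‖ * ‖v‖) ≤ ⟪g' (x + t • v) - g' x, v⟫ :=
      neg_le_of_abs_le (abs_real_inner_le_norm _ _)
    rw [inner_sub_left] at hcs
    nlinarith [mul_le_mul_of_nonneg_right hlip (norm_nonneg v)]
  have h01 := hmono (by simp) (by simp) zero_le_one
  norm_num [ψ, v] at h01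
  linarith

theorem inner_le_mul_norm_of_infDist_le {X : Set E} {x w v : E} {ε : ℝ} (hw : w ∈ X)
    (hε : Metric.infDist 0 {g | ∃ n : E, (∀ w ∈ X, ⟪n, w - x⟫ ≤ 0) ∧ g = v + n} ≤ ε) :
    ⟪v, x - w⟫ ≤ ε * ‖x - w‖ := by
  rcases (norm_nonneg (x - w)).eq_or_lt with h0 | hpos
  · simp [norm_eq_zero.1 h0.symm]
  refine le_trans ?_ (mul_le_mul_of_nonneg_right hε hpos.le)
  have hne : {g | ∃ n : E, (∀ w ∈ X, ⟪n, w - x⟫ ≤ 0) ∧ g = v + n}.Nonempty :=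
    ⟨v, 0, fun _ _ => by simp, by simp⟩
  rw [← div_le_iff₀ hpos, Metric.le_infDist hne]
  rintro _ ⟨n, hn, rfl⟩
  rw [div_le_iff₀ hpos, dist_zero_left]
  have hnormal : ⟪n, x - w⟫ ≥ 0 := by
    rw [← neg_sub, inner_neg_right]
    exact neg_nonneg.2 (hn w hw)
  calc ⟪v, x - w⟫ ≤ ⟪v + n, x - w⟫ := by rw [inner_add_left]; linarith
    _ ≤ ‖v + n‖ * ‖x - w‖ := real_inner_le_norm _ _

theorem mul_sq_norm_sub_le_of_isMinOn_prox [CompleteSpace E] {φ Φ : E → ℝ} {φ' : E → E}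
    {L r a ε : ℝ} {X : Set E} {x s : E} (hφ : ∀ u, HasGradientAt φ (φ' u) u)
    (hL : ∀ u u', ‖φ' u - φ' u'‖ ≤ L * ‖u - u'‖) (hle : φ s ≤ Φ s) (hgap : Φ x - φ x ≤ a)
    (hx : x ∈ X) (hs : s ∈ X) (hprox : IsMinOn (fun u => Φ u + r / 2 * ‖u - x‖ ^ 2) X s)
    (hstat : Metric.infDist 0 {g | ∃ n : E, (∀ w ∈ X, ⟪n, w - x⟫ ≤ 0) ∧ g = φ' x + n} ≤ ε) :
    (r - L) / 2 * ‖s - x‖ ^ 2 ≤ a + ε * ‖s - x‖ := by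
  have hmin : Φ s + r / 2 * ‖s - x‖ ^ 2 ≤ Φ x := by simpa using isMinOn_iff.1 hprox x hx
  have hdescent := lower_quadratic_bound_of_lipschitz_gradient hφ hL x s
  have hinner := inner_le_mul_norm_of_infDist_le hs hstat
  rw [← neg_sub, inner_neg_right, norm_neg] at hinner
  linarith

end InnerProductSpace

theorem stmt_17_general
    {E D : Type*} [NormedAddCommGroup E] [InnerProductSpace ℝ E] [CompleteSpace E]
    [NormedAddCommGroup D] [InnerProductSpace ℝ D]
    (f : E → D → ℝ) (gx : E → D → E) (gy : E → D → D) (Lx r₁ θ τ : ℝ)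
    (hr₁ : r₁ > Lx) (hθ : 0 < θ) (hτ : 0 < τ)
    (X : Set E) (Y : Set D)
    (hXc : IsCompact X)
    (hgradx : ∀ x y, HasGradientAt (fun x' => f x' y) (gx x y) x)
    (hLipx : ∀ x x' y y', ‖gx x y - gx x' y'‖ ≤ Lx * (‖x - x'‖ + ‖y - y'‖))
    -- KŁ property with exponent θ of the dual function:
    (hKL : ∀ x ∈ X, ∀ y ∈ Y,
      (sSup ((fun y' => f x y') '' Y) - f x y) ^ θ ≤
        (1 / τ) * Metric.infDist (0 : D)
          {g | ∃ n : D, (∀ w ∈ Y, ⟪n, w - y⟫ ≤ 0) ∧ g = -(gy x y) + n})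
    -- x*(z) = argmin_{x∈X} max_{y∈Y} f(x,y) + (r₁/2)‖x−z‖², where ymax x attains max_{y∈Y} f(x,·)
    (ymax : E → D)
    (hymax : ∀ x, ymax x ∈ Y ∧ IsMaxOn (fun y => f x y) Y (ymax x))
    (xstar : E → E)
    (hxstar : ∀ z, xstar z ∈ X ∧
      IsMinOn (fun x => f x (ymax x) + r₁ / 2 * ‖x - z‖ ^ 2) X (xstar z)) :
    ∃ C > (0 : ℝ), ∀ (ε : ℝ), 0 ≤ ε → ∀ x ∈ X, ∀ y ∈ Y,
      Metric.infDist (0 : E)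
          {g | ∃ n : E, (∀ w ∈ X, ⟪n, w - x⟫ ≤ 0) ∧ g = gx x y + n} ≤ ε →
      Metric.infDist (0 : D)
          {g | ∃ n : D, (∀ w ∈ Y, ⟪n, w - y⟫ ≤ 0) ∧ g = -(gy x y) + n} ≤ ε →
      ‖xstar x - x‖ ≤ C * ε ^ (min (1 : ℝ) (1 / (2 * θ))) := by
  have hμ : 0 < (r₁ - Lx) / 2 := by linarith
  set μ := (r₁ - Lx) / 2
  refine ⟨1 / μ + 1 / (√μ * τ ^ (1 / (2 * θ))) + Metric.diam X, by positivity, ?_⟩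
  intro ε hε x hx y hy hstatx hstaty
  obtain ⟨hsX, hprox⟩ := hxstar x
  have hgap := (hymax x).2.sub_le_of_lojasiewicz (hymax x).1 hy hθ hτ (hKL x hx y hy) hstaty
  have hquad := mul_sq_norm_sub_le_of_isMinOn_prox (hgradx · y)
    (fun u u' => by simpa using hLipx u u' y y) (isMaxOn_iff.1 (hymax _).2 y hy) hgap hx hsX
    hprox hstatx
  have hroot := le_div_add_div_sqrt_of_mul_sq_le hμ (by positivity) hε hquad
  refine le_mul_rpow_min_of_le hε (by positivity) (by positivity) (by positivity)
    Metric.diam_nonneg ?_ ?_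
  · calc ‖xstar x - x‖ ≤ ε / μ + (ε / τ) ^ (1 / (2 * θ)) / √μ := hroot
      _ = 1 / μ * ε + 1 / (√μ * τ ^ (1 / (2 * θ))) * ε ^ (1 / (2 * θ)) := by
        rw [Real.div_rpow hε hτ.le]; ring
  · simpa [dist_eq_norm] using Metric.dist_le_diam_of_mem hXc.isBounded hsX hx

/-- GS implies OS under KŁ: if `(x,y) ∈ X × Y` is an `ε`-game
stationary point and `f(x,·)` satisfies the KŁ property with exponent `θ`, then
`(x,y)` is an `O(ε^{min{1,1/(2θ)}})`-optimization stationary point, where the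
optimization stationarity is measured by `‖prox(x) − x‖` with
`prox(x) = x*(x) = argmin_{u∈X} max_{y∈Y} f(u,y) + (r₁/2)‖u−x‖²`. -/
theorem stmt_17
    {E D : Type*} [NormedAddCommGroup E] [InnerProductSpace ℝ E] [CompleteSpace E]
    [NormedAddCommGroup D] [InnerProductSpace ℝ D] [CompleteSpace D]
    (f : E → D → ℝ) (gx : E → D → E) (gy : E → D → D) (Lx Ly r₁ r₂ θ τ : ℝ)
    (hr₁ : r₁ > Lx) (hr₂ : r₂ > Ly) (hθ : 0 < θ) (hθ1 : θ < 1) (hτ : 0 < τ)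
    (X : Set E) (Y : Set D)
    (hXc : IsCompact X) (hXconv : Convex ℝ X) (hXne : X.Nonempty)
    (hYc : IsCompact Y) (hYconv : Convex ℝ Y) (hYne : Y.Nonempty)
    (hgradx : ∀ x y, HasGradientAt (fun x' => f x' y) (gx x y) x)
    (hgrady : ∀ x y, HasGradientAt (fun y' => f x y') (gy x y) y)
    (hLipx : ∀ x x' y y', ‖gx x y - gx x' y'‖ ≤ Lx * (‖x - x'‖ + ‖y - y'‖))
    (hLipy : ∀ x x' y y', ‖gy x y - gy x' y'‖ ≤ Ly * (‖x - x'‖ + ‖y - y'‖))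
    -- KŁ property with exponent θ of the dual function:
    (hKL : ∀ x ∈ X, ∀ y ∈ Y,
      (sSup ((fun y' => f x y') '' Y) - f x y) ^ θ ≤
        (1 / τ) * Metric.infDist (0 : D)
          {g | ∃ n : D, (∀ w ∈ Y, ⟪n, w - y⟫ ≤ 0) ∧ g = -(gy x y) + n})
    (F : E → D → E → D → ℝ)
    (hF : ∀ x y z v, F x y z v
      = f x y + r₁ / 2 * ‖x - z‖ ^ 2 - r₂ / 2 * ‖y - v‖ ^ 2)
    -- h(x,z,v) = max_{y∈Y} F(x,y,z,v) and x(z,v) = argmin_{x∈X} h(x,z,v)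
    (h : E → E → D → ℝ) (yOf : E → E → D → D)
    (hyOf : ∀ x z v, yOf x z v ∈ Y ∧ IsMaxOn (fun y => F x y z v) Y (yOf x z v) ∧
      h x z v = F x (yOf x z v) z v)
    (xm : E → D → E)
    (hxm : ∀ z v, xm z v ∈ X ∧ IsMinOn (fun x => h x z v) X (xm z v))
    -- d(y,z,v) = min_{x∈X} F(x,y,z,v) and y(z,v) = argmax_{y∈Y} d(y,z,v)
    (d : D → E → D → ℝ) (xOf : D → E → D → E)
    (hxOf : ∀ y z v, xOf y z v ∈ X ∧ IsMinOn (fun x => F x y z v) X (xOf y z v) ∧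
      d y z v = F (xOf y z v) y z v)
    (yzv : E → D → D)
    (hyzv : ∀ z v, yzv z v ∈ Y ∧ IsMaxOn (fun y => d y z v) Y (yzv z v))
    -- x*(z) = argmin_{x∈X} max_{y∈Y} f(x,y) + (r₁/2)‖x−z‖², where ymax x attains max_{y∈Y} f(x,·)
    (ymax : E → D)
    (hymax : ∀ x, ymax x ∈ Y ∧ IsMaxOn (fun y => f x y) Y (ymax x))
    (xstar : E → E)
    (hxstar : ∀ z, xstar z ∈ X ∧
      IsMinOn (fun x => f x (ymax x) + r₁ / 2 * ‖x - z‖ ^ 2) X (xstar z)) :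
    ∃ C > (0 : ℝ), ∀ (ε : ℝ), 0 ≤ ε → ∀ x ∈ X, ∀ y ∈ Y,
      Metric.infDist (0 : E)
          {g | ∃ n : E, (∀ w ∈ X, ⟪n, w - x⟫ ≤ 0) ∧ g = gx x y + n} ≤ ε →
      Metric.infDist (0 : D)
          {g | ∃ n : D, (∀ w ∈ Y, ⟪n, w - y⟫ ≤ 0) ∧ g = -(gy x y) + n} ≤ ε →
      ‖xstar x - x‖ ≤ C * ε ^ (min (1 : ℝ) (1 / (2 * θ))) :=
  stmt_17_general f gx gy Lx r₁ θ τ hr₁ hθ hτ X Y hXc hgradx hLipx hKL ymax hymax xstar hxstar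
end
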